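/- arXiv:1807.06097 — 5 statements merged into one kernel-verified Lean document; each statement's English description precedes it below -/
import Mathlib

section
/- Let Q be a densely ordered linear order with at least two elements (endpoints allowed). If D₁ and D₂ are definable subsets of Q^n with D₁ a proper subset of D₂, then there is no definable bijection from D₁ onto D₂. (In other words, every dense linear order satisfies the definable pigeonhole principle PHP.) -/
open FirstOrder FirstOrder.Language

attribute [local instance] FirstOrder.Language.orderStructure

/-- A subset of `Q^n` is definable if it is defined by a first-order formula in the
language of orders with finitely many parameters from `Q`. -/
def DLODefinable {Q : Type*} [LinearOrder Q] {n : ℕ} (s : Set (Fin n → Q)) : Prop :=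
  ∃ A : Set Q, A.Finite ∧ A.Definable Language.order s

/-- The graph of `f` restricted to `D₁`, as a subset of `Q^(n+m)`. -/
def graphOn {Q : Type*} {n m : ℕ} (D₁ : Set (Fin n → Q))
    (f : (Fin n → Q) → (Fin m → Q)) : Set (Fin (n + m) → Q) :=
  {z | ∃ x ∈ D₁, z = Fin.append x (f x)}

/-- A definable bijection from `D₁ ⊆ Q^n` onto `D₂ ⊆ Q^m`: a bijection from `D₁` onto `D₂`
whose graph is a definable subset of `Q^(n+m)`. -/
def DefBij {Q : Type*} [LinearOrder Q] {n m : ℕ} (D₁ : Set (Fin n → Q))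
    (D₂ : Set (Fin m → Q)) : Prop :=
  ∃ f : (Fin n → Q) → (Fin m → Q), Set.BijOn f D₁ D₂ ∧ DLODefinable (graphOn D₁ f)

/-!
Let `B` be a finite set of parameters containing those of the graph of `f` and the endpoints of
`Q`. In a dense order, tuples with the same quantifier-free type over `B` (the same order diagram
together with `B`) satisfy the same formulas over `B`: any finite order-preserving correspondence
fixing `B` extends by one more point on either side, which carries the induction through the
quantifiers. So `D₁` is a union of types, and because the graph of `f` is definable, `f` maps
tuples of equal type to tuples of equal type and back. Hence `f` induces a bijection between the
finitely many types realized in `D₁` and those realized in `D₂`, while `D₂` realizes a type that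
`D₁` does not.
-/

section PartialIso

open Set

variable {Q : Type*} [LinearOrder Q]

theorem exists_between_of_finite [DenselyOrdered Q] [Nonempty Q] {L U : Set Q}
    (hL : L.Finite) (hU : U.Finite) (hLU : ∀ a ∈ L, ∀ c ∈ U, a < c)
    (hLmax : ∀ a ∈ L, ¬IsMax a) (hUmin : ∀ c ∈ U, ¬IsMin c) :
    ∃ v, (∀ a ∈ L, a < v) ∧ ∀ c ∈ U, v < c := by
  rcases L.eq_empty_or_nonempty with rfl | hLne <;>
    rcases U.eq_empty_or_nonempty with rfl | hUne
  · obtain ⟨v⟩ := ‹Nonempty Q›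
    exact ⟨v, by simp, by simp⟩
  · obtain ⟨c, hc, hcmin⟩ := exists_min_image U id hU hUne
    obtain ⟨v, hv⟩ := not_isMin_iff.1 (hUmin c hc)
    exact ⟨v, by simp, fun c' hc' => hv.trans_le (hcmin c' hc')⟩
  · obtain ⟨a, ha, hamax⟩ := exists_max_image L id hL hLne
    obtain ⟨v, hv⟩ := not_isMax_iff.1 (hLmax a ha)
    exact ⟨v, fun a' ha' => (hamax a' ha').trans_lt hv, by simp⟩
  · obtain ⟨a, ha, hamax⟩ := exists_max_image L id hL hLne
    obtain ⟨c, hc, hcmin⟩ := exists_min_image U id hU hUne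
    obtain ⟨v, hav, hvc⟩ := exists_between (hLU a ha c hc)
    exact ⟨v, fun a' ha' => (hamax a' ha').trans_lt hav,
      fun c' hc' => hvc.trans_le (hcmin c' hc')⟩

/-- Fixing the endpoints is what lets back-and-forth work in a dense order with endpoints. -/
structure IsFinitePartialIso (R : Set (Q × Q)) : Prop where
  finite : R.Finite
  le_iff_le : ∀ p ∈ R, ∀ q ∈ R, p.1 ≤ q.1 ↔ p.2 ≤ q.2
  isMin_mem : ∀ e : Q, IsMin e → (e, e) ∈ R
  isMax_mem : ∀ e : Q, IsMax e → (e, e) ∈ R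

namespace IsFinitePartialIso

variable {R : Set (Q × Q)}

theorem lt_iff_lt (hR : IsFinitePartialIso R) {p q : Q × Q} (hp : p ∈ R) (hq : q ∈ R) :
    p.1 < q.1 ↔ p.2 < q.2 := by
  simp only [lt_iff_not_ge, hR.le_iff_le q hq p hp]

theorem eq_iff_eq (hR : IsFinitePartialIso R) {p q : Q × Q} (hp : p ∈ R) (hq : q ∈ R) :
    p.1 = q.1 ↔ p.2 = q.2 := by
  simp only [le_antisymm_iff, hR.le_iff_le p hp q hq, hR.le_iff_le q hq p hp]

theorem swap (hR : IsFinitePartialIso R) : IsFinitePartialIso (Prod.swap ⁻¹' R) where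
  finite := hR.finite.preimage Prod.swap_injective.injOn
  le_iff_le _ hp _ hq := (hR.le_iff_le _ hp _ hq).symm
  isMin_mem e he := hR.isMin_mem e he
  isMax_mem e he := hR.isMax_mem e he

theorem insert_pair (hR : IsFinitePartialIso R) {u v : Q}
    (h : ∀ q ∈ R, (u ≤ q.1 ↔ v ≤ q.2) ∧ (q.1 ≤ u ↔ q.2 ≤ v)) :
    IsFinitePartialIso (insert (u, v) R) where
  finite := hR.finite.insert _
  le_iff_le := by
    rintro p (rfl | hp) q (rfl | hq)
    · exact iff_of_true le_rfl le_rfl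
    · exact (h q hq).1
    · exact (h p hp).2
    · exact hR.le_iff_le p hp q hq
  isMin_mem e he := mem_insert_of_mem _ (hR.isMin_mem e he)
  isMax_mem e he := mem_insert_of_mem _ (hR.isMax_mem e he)

variable [DenselyOrdered Q]

theorem forth (hR : IsFinitePartialIso R) (u : Q) :
    ∃ v, IsFinitePartialIso (insert (u, v) R) := by
  by_cases hu : ∃ v, (u, v) ∈ R
  · obtain ⟨v, huv⟩ := hu
    exact ⟨v, by rwa [insert_eq_of_mem huv]⟩
  have hne : ∀ q ∈ R, q.1 ≠ u := fun q hq he => hu ⟨q.2, he ▸ hq⟩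
  have : Nonempty Q := ⟨u⟩
  obtain ⟨v, hlt, hgt⟩ := exists_between_of_finite
    ((hR.finite.subset (sep_subset R fun q => q.1 < u)).image Prod.snd)
    ((hR.finite.subset (sep_subset R fun q => u < q.1)).image Prod.snd)
    (by
      rintro _ ⟨p, ⟨hp, hpu⟩, rfl⟩ _ ⟨q, ⟨hq, huq⟩, rfl⟩
      exact (hR.lt_iff_lt hp hq).1 (hpu.trans huq))
    (by
      rintro _ ⟨p, ⟨hp, hpu⟩, rfl⟩ hmax
      have hle : p.2 ≤ p.1 := (hR.le_iff_le _ (hR.isMax_mem _ hmax) p hp).2 le_rfl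
      exact (hle.trans_lt hpu).not_ge (hmax (hle.trans hpu.le)))
    (by
      rintro _ ⟨p, ⟨hp, hup⟩, rfl⟩ hmin
      have hle : p.1 ≤ p.2 := (hR.le_iff_le p hp _ (hR.isMin_mem _ hmin)).2 le_rfl
      exact (hup.trans_le hle).not_ge (hmin (hup.le.trans hle)))
  refine ⟨v, hR.insert_pair fun q hq => ?_⟩
  rcases (hne q hq).lt_or_gt with hqu | huq
  · have hqv : q.2 < v := hlt _ ⟨q, ⟨hq, hqu⟩, rfl⟩
    exact ⟨iff_of_false hqu.not_ge hqv.not_ge, iff_of_true hqu.le hqv.le⟩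
  · have hvq : v < q.2 := hgt _ ⟨q, ⟨hq, huq⟩, rfl⟩
    exact ⟨iff_of_true huq.le hvq.le, iff_of_false huq.not_ge hvq.not_ge⟩

theorem back (hR : IsFinitePartialIso R) (v : Q) :
    ∃ u, IsFinitePartialIso (insert (u, v) R) := by
  obtain ⟨u, hu⟩ := hR.swap.forth v
  refine ⟨u, ?_⟩
  convert hu.swap using 1
  ext ⟨a, b⟩
  simp [and_comm]

theorem exists_superset_forall_mem (hR : IsFinitePartialIso R) {δ : Type*} [Finite δ]
    (y : δ → Q) :
    ∃ R', R ⊆ R' ∧ IsFinitePartialIso R' ∧ ∃ y' : δ → Q, ∀ j, (y j, y' j) ∈ R' := by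
  suffices ∀ S : Set Q, S.Finite →
      ∃ R', R ⊆ R' ∧ IsFinitePartialIso R' ∧ ∀ a ∈ S, ∃ b, (a, b) ∈ R' by
    obtain ⟨R', hRR', hR', hS⟩ := this (range y) (finite_range y)
    choose y' hy' using fun j => hS (y j) (mem_range_self j)
    exact ⟨R', hRR', hR', y', hy'⟩
  intro S hS
  induction S, hS using Set.Finite.induction_on with
  | empty => exact ⟨R, subset_rfl, hR, by simp⟩
  | @insert a S _ _ ih =>
    obtain ⟨R', hRR', hR', hS⟩ := ih
    obtain ⟨b, hb⟩ := hR'.forth a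
    refine ⟨_, hRR'.trans (subset_insert _ _), hb, ?_⟩
    rintro c (rfl | hc)
    · exact ⟨b, mem_insert _ _⟩
    · obtain ⟨d, hd⟩ := hS c hc
      exact ⟨d, mem_insert_of_mem _ hd⟩

end IsFinitePartialIso

end PartialIso

namespace FirstOrder.Language

variable {Q : Type*} [LinearOrder Q] {B : Set Q} {R : Set (Q × Q)}

theorem Term.realize_pair_mem {γ : Type*} (hB : ∀ b ∈ B, (b, b) ∈ R) {v w : γ → Q}
    (hvw : ∀ i, (v i, w i) ∈ R) (t : (Language.order[[B]]).Term γ) :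
    (t.realize v, t.realize w) ∈ R := by
  induction t with
  | var i => exact hvw i
  | @func l f ts _ =>
    rcases f with f | c
    · exact f.elim
    · cases l with
      | zero => exact hB c c.2
      | succ l => exact c.elim

theorem BoundedFormula.realize_iff_of_isFinitePartialIso [DenselyOrdered Q] {α : Type*}
    {k : ℕ} (φ : (Language.order[[B]]).BoundedFormula α k) (hR : IsFinitePartialIso R)
    (hB : ∀ b ∈ B, (b, b) ∈ R) {v w : α → Q} (hvw : ∀ a, (v a, w a) ∈ R) {xs ys : Fin k → Q}
    (hxy : ∀ i, (xs i, ys i) ∈ R) : φ.Realize v xs ↔ φ.Realize w ys := by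
  induction φ generalizing R with
  | falsum => exact Iff.rfl
  | equal t₁ t₂ =>
    have h : ∀ i, (Sum.elim v xs i, Sum.elim w ys i) ∈ R := Sum.rec hvw hxy
    exact hR.eq_iff_eq (t₁.realize_pair_mem hB h) (t₂.realize_pair_mem hB h)
  | rel r ts =>
    have h : ∀ i, (Sum.elim v xs i, Sum.elim w ys i) ∈ R := Sum.rec hvw hxy
    rcases r with r | r
    · cases r
      exact hR.le_iff_le _ ((ts 0).realize_pair_mem hB h) _ ((ts 1).realize_pair_mem hB h)
    · exact r.elim
  | imp φ ψ ihφ ihψ => exact imp_congr (ihφ hR hB hvw hxy) (ihψ hR hB hvw hxy)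
  | all φ ih =>
    have step : ∀ u z, IsFinitePartialIso (insert (u, z) R) →
        (φ.Realize v (Fin.snoc xs u) ↔ φ.Realize w (Fin.snoc ys z)) := fun u z h =>
      ih h (fun b hb => Set.mem_insert_of_mem _ (hB b hb))
        (fun a => Set.mem_insert_of_mem _ (hvw a))
        (Fin.lastCases (by simp) fun i => by simpa using Or.inr (hxy i))
    simp only [BoundedFormula.realize_all]
    exact ⟨fun H z => let ⟨u, hu⟩ := hR.back z; (step u z hu).1 (H u),
      fun H u => let ⟨z, hz⟩ := hR.forth u; (step u z hz).2 (H z)⟩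

end FirstOrder.Language

theorem Set.Definable.mem_iff_of_isFinitePartialIso {Q : Type*} [LinearOrder Q]
    [DenselyOrdered Q] {B : Set Q} {R : Set (Q × Q)} {α : Type*} {D : Set (α → Q)}
    (hD : B.Definable Language.order D) (hR : IsFinitePartialIso R) (hB : ∀ b ∈ B, (b, b) ∈ R)
    {x y : α → Q} (hxy : ∀ i, (x i, y i) ∈ R) : x ∈ D ↔ y ∈ D := by
  obtain ⟨φ, rfl⟩ := hD
  exact φ.realize_iff_of_isFinitePartialIso hR hB hxy finZeroElim

section QFType

variable {Q : Type*} [LinearOrder Q] {B : Set Q} {γ : Type*}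

def qfType (B : Set Q) (x : γ → Q) : γ ⊕ B → γ ⊕ B → Prop :=
  fun i j => Sum.elim x Subtype.val i ≤ Sum.elim x Subtype.val j

theorem qfType_eq_iff {x y : γ → Q} : qfType B x = qfType B y ↔
    ∀ i j : γ ⊕ B, (Sum.elim x Subtype.val i ≤ Sum.elim x Subtype.val j ↔
      Sum.elim y Subtype.val i ≤ Sum.elim y Subtype.val j) := by
  simp only [qfType, funext_iff, eq_iff_iff]

theorem qfType_eq_of_forall_mem {R : Set (Q × Q)}
    (hR : ∀ p ∈ R, ∀ q ∈ R, p.1 ≤ q.1 ↔ p.2 ≤ q.2)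
    (hB : ∀ b ∈ B, (b, b) ∈ R) {x y : γ → Q} (hxy : ∀ i, (x i, y i) ∈ R) :
    qfType B x = qfType B y := by
  have h : ∀ i : γ ⊕ B, (Sum.elim x Subtype.val i, Sum.elim y Subtype.val i) ∈ R :=
    Sum.rec hxy fun b => hB b b.2
  exact qfType_eq_iff.2 fun i j => hR _ (h i) _ (h j)

theorem isFinitePartialIso_of_qfType_eq [Finite γ] (hB : B.Finite)
    (hend : ∀ e : Q, IsMin e ∨ IsMax e → e ∈ B) {x y : γ → Q} (h : qfType B x = qfType B y) :
    IsFinitePartialIso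
      (Set.range fun i : γ ⊕ B => (Sum.elim x Subtype.val i, Sum.elim y Subtype.val i)) where
  finite := have := hB.to_subtype; Set.finite_range _
  le_iff_le := by
    rintro _ ⟨i, rfl⟩ _ ⟨j, rfl⟩
    exact qfType_eq_iff.1 h i j
  isMin_mem e he := ⟨Sum.inr ⟨e, hend e (Or.inl he)⟩, rfl⟩
  isMax_mem e he := ⟨Sum.inr ⟨e, hend e (Or.inr he)⟩, rfl⟩

theorem Set.Definable.exists_mem_qfType_eq [DenselyOrdered Q] [Finite γ] {δ : Type*}
    [Finite δ] (hB : B.Finite) (hend : ∀ e : Q, IsMin e ∨ IsMax e → e ∈ B) {G : Set (γ ⊕ δ → Q)}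
    (hG : B.Definable Language.order G) {x x' : γ → Q} {y : δ → Q} (hxy : Sum.elim x y ∈ G)
    (h : qfType B x = qfType B x') : ∃ y', Sum.elim x' y' ∈ G ∧ qfType B y = qfType B y' := by
  have hR₀ := isFinitePartialIso_of_qfType_eq hB hend h
  obtain ⟨R, hR₀R, hR, y', hyy'⟩ := hR₀.exists_superset_forall_mem y
  have hBR : ∀ b ∈ B, (b, b) ∈ R := fun b hb => hR₀R ⟨Sum.inr ⟨b, hb⟩, rfl⟩
  have hxx' : ∀ i, (x i, x' i) ∈ R := fun i => hR₀R ⟨Sum.inl i, rfl⟩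
  exact ⟨y', (hG.mem_iff_of_isFinitePartialIso hR hBR (Sum.rec hxx' hyy')).1 hxy,
    qfType_eq_of_forall_mem hR.le_iff_le hBR hyy'⟩

end QFType

theorem Set.ncard_image_eq_of_forall_eq_iff {X T U : Type*} {s : Set X} {g : X → T}
    {h : X → U} (hgh : ∀ x ∈ s, ∀ y ∈ s, g x = g y ↔ h x = h y) :
    (g '' s).ncard = (h '' s).ncard := by
  refine Set.ncard_congr (fun c hc => h hc.choose) (fun c hc => ⟨_, hc.choose_spec.1, rfl⟩)
    (fun c c' hc hc' he => ?_) ?_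
  · rw [← hc.choose_spec.2, ← hc'.choose_spec.2]
    exact (hgh _ hc.choose_spec.1 _ hc'.choose_spec.1).2 he
  · rintro _ ⟨x, hx, rfl⟩
    have hc : g x ∈ g '' s := ⟨x, hx, rfl⟩
    exact ⟨g x, hc, (hgh _ hc.choose_spec.1 x hx).1 hc.choose_spec.2⟩

theorem Set.not_bijOn_of_ssubset_of_invariant {X T : Type*} [Finite T] {D₁ D₂ : Set X}
    {f : X → X} (τ : X → T) (hss : D₁ ⊂ D₂) (hD₁ : ∀ x ∈ D₁, ∀ y, τ x = τ y → y ∈ D₁)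
    (hf : ∀ x ∈ D₁, ∀ y ∈ D₁, τ (f x) = τ (f y) ↔ τ x = τ y) : ¬ Set.BijOn f D₁ D₂ := by
  intro hbij
  have hcard : (τ '' D₂).ncard = (τ '' D₁).ncard := by
    rw [← hbij.image_eq, Set.image_image]
    exact Set.ncard_image_eq_of_forall_eq_iff hf
  obtain ⟨b, hb₂, hb₁⟩ := Set.exists_of_ssubset hss
  have hlt : τ '' D₁ ⊂ τ '' D₂ := Set.ssubset_iff_subset_ne.2 ⟨Set.image_mono hss.subset,
    fun he => let ⟨x, hx, hxb⟩ := he.symm ▸ Set.mem_image_of_mem τ hb₂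
      hb₁ (hD₁ x hx b hxb)⟩
  exact (Set.ncard_lt_ncard hlt).ne' hcard

theorem finite_setOf_isMin_or_isMax {Q : Type*} [LinearOrder Q] :
    {e : Q | IsMin e ∨ IsMax e}.Finite :=
  ((Set.subsingleton_isBot Q).finite.union (Set.subsingleton_isTop Q).finite).subset
    fun _ he => he.imp isBot_iff_isMin.2 isTop_iff_isMax.2

theorem graphOn_eq_image {Q : Type*} {n m : ℕ} (D : Set (Fin n → Q))
    (f : (Fin n → Q) → (Fin m → Q)) : graphOn D f = (fun x => Fin.append x (f x)) '' D := by
  ext z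
  simp [graphOn, eq_comm]

theorem definable_image_sumElim_of_graphOn {Q : Type*} [LinearOrder Q] {A : Set Q}
    {n m : ℕ} {D : Set (Fin n → Q)} {f : (Fin n → Q) → (Fin m → Q)}
    (hG : A.Definable Language.order (graphOn D f)) :
    A.Definable Language.order ((fun x => Sum.elim x (f x)) '' D) := by
  simpa only [graphOn_eq_image, Set.image_image, Fin.append_comp_sumElim] using
    hG.image_comp (Sum.elim (Fin.castAdd m) (Fin.natAdd n))

theorem dlo_php_general {Q : Type*} [LinearOrder Q] [DenselyOrdered Q] {n : ℕ}
    (D₁ D₂ : Set (Fin n → Q))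
    (hss : D₁ ⊂ D₂) : ¬ DefBij D₁ D₂ := by
  rintro ⟨f, hf, A, hA, hG⟩
  set B := A ∪ {e : Q | IsMin e ∨ IsMax e}
  have hB : B.Finite := hA.union finite_setOf_isMin_or_isMax
  have hend : ∀ e : Q, IsMin e ∨ IsMax e → e ∈ B := fun e he => Or.inr he
  have : Finite B := hB.to_subtype
  have hG₁ : B.Definable Language.order ((fun x => Sum.elim x (f x)) '' D₁) :=
    (definable_image_sumElim_of_graphOn hG).mono Set.subset_union_left
  have hG₂ : B.Definable Language.order ((fun x => Sum.elim (f x) x) '' D₁) := by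
    simpa only [Set.image_image, Sum.elim_swap] using hG₁.image_comp Sum.swap
  have hD₁ : ∀ x ∈ D₁, ∀ y, qfType B x = qfType B y → y ∈ D₁ := fun x hx y h => by
    obtain ⟨_, ⟨x₀, hx₀, he⟩, -⟩ := hG₁.exists_mem_qfType_eq hB hend ⟨x, hx, rfl⟩ h
    rwa [← (Sum.elim_eq_iff.1 he).1]
  have hpres : ∀ x ∈ D₁, ∀ y, qfType B x = qfType B y → qfType B (f x) = qfType B (f y) :=
    fun x hx y h => by
      obtain ⟨_, ⟨x₀, -, he⟩, hfxy⟩ := hG₁.exists_mem_qfType_eq hB hend ⟨x, hx, rfl⟩ h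
      obtain ⟨rfl, rfl⟩ := Sum.elim_eq_iff.1 he
      exact hfxy
  have hrefl : ∀ x ∈ D₁, ∀ y ∈ D₁, qfType B (f x) = qfType B (f y) → qfType B x = qfType B y :=
    fun x hx y hy h => by
      obtain ⟨_, ⟨x₀, hx₀, he⟩, hxy⟩ := hG₂.exists_mem_qfType_eq hB hend ⟨x, hx, rfl⟩ h
      obtain ⟨hfx, rfl⟩ := Sum.elim_eq_iff.1 he
      rwa [← hf.injOn hx₀ hy hfx]
  exact Set.not_bijOn_of_ssubset_of_invariant (qfType B) hss hD₁
    (fun x hx y hy => ⟨hrefl x hx y hy, hpres x hx y⟩) hf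

/-- Every densely ordered linear order with at least two elements satisfies the definable
pigeonhole principle: no definable bijection from a definable proper subset onto the set. -/
theorem dlo_php {Q : Type*} [LinearOrder Q] [DenselyOrdered Q] [Nontrivial Q] {n : ℕ}
    (D₁ D₂ : Set (Fin n → Q)) (h₁ : DLODefinable D₁) (h₂ : DLODefinable D₂)
    (hss : D₁ ⊂ D₂) : ¬ DefBij D₁ D₂ :=
  dlo_php_general D₁ D₂ hss
end

section
/- Let Q be a nonempty dense linear order without endpoints. If A, B, C ⊆ Q^n are pairwise disjoint definable sets and there is a definable bijection from A ∪ C onto B ∪ C, then there is a definable bijection from A onto B. (The Grothendieck semiring of Q is cancellative.) -/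
open FirstOrder FirstOrder.Language

attribute [local instance] FirstOrder.Language.orderStructure

/-!
Send `x ∈ A` to the first point of its forward orbit under `f : A ∪ C → B ∪ C` that lies in `B`;
in between, the orbit runs through `C`. As for finite sets, this is a bijection `A → B` once the
`f`-chains through `C` leaving `A` or entering `B` have bounded length, and its graph is then a
finite union, over the chain length `k`, of projections of definable sets of chains.

The bound comes from the order. A set definable over `P` is closed under replacing a point by one
of the same order type over `P` (induction on formulas, with the back-and-forth property of dense
orders in the quantifier step), so a definable map only outputs coordinates of its input or
elements of `P`. The points of an injective orbit segment starting at `x` therefore have all their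
coordinates among the at most `n + #P` coordinates of `x` and parameters, and there are at most
`(n + #P) ^ n` of them.
-/

theorem Fin.comp_append {α β : Type*} {m n : ℕ} (g : α → β) (a : Fin m → α) (b : Fin n → α) :
    g ∘ Fin.append a b = Fin.append (g ∘ a) (g ∘ b) := by
  funext i
  refine Fin.addCases (fun i => ?_) (fun i => ?_) i <;> simp

theorem append_mem_graphOn_iff {M : Type*} {n m : ℕ} {D : Set (Fin n → M)}
    {f : (Fin n → M) → (Fin m → M)} {x : Fin n → M} {y : Fin m → M} :
    Fin.append x y ∈ graphOn D f ↔ x ∈ D ∧ y = f x := by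
  constructor
  · rintro ⟨x', hx', h⟩
    have hxy := (Fin.appendEquiv n m).injective (a₁ := (x, y)) (a₂ := (x', f x')) h
    obtain ⟨rfl, rfl⟩ := Prod.mk.injEq .. ▸ hxy
    exact ⟨hx', rfl⟩
  · rintro ⟨hx, rfl⟩
    exact ⟨x, hx, rfl⟩

section SameOrderType

variable {Q : Type*} [LinearOrder Q] {ι κ : Type*}

def SameOrderType (v w : ι → Q) : Prop :=
  ∀ i j, cmp (v i) (v j) = cmp (w i) (w j)

theorem SameOrderType.symm {v w : ι → Q} (h : SameOrderType v w) : SameOrderType w v :=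
  fun i j => (h i j).symm

theorem SameOrderType.comp {v w : ι → Q} (h : SameOrderType v w) (g : κ → ι) :
    SameOrderType (v ∘ g) (w ∘ g) :=
  fun i j => h (g i) (g j)

theorem SameOrderType.exists_cmp_eq [DenselyOrdered Q] [NoMinOrder Q] [NoMaxOrder Q]
    [Nonempty Q] [Finite ι] {v w : ι → Q} (h : SameOrderType v w) (x : Q) :
    ∃ y, ∀ i, cmp (v i) x = cmp (w i) y := by
  classical
  have := Fintype.ofFinite ι
  let g : Order.PartialIso Q Q := ⟨Finset.univ.image fun i => (v i, w i), by
    simp only [Finset.mem_image, Finset.mem_univ, true_and]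
    rintro _ ⟨i, rfl⟩ _ ⟨j, rfl⟩
    exact h i j⟩
  obtain ⟨y, hy⟩ := g.exists_across x
  exact ⟨y, fun i => hy (v i, w i) (Finset.mem_image_of_mem _ (Finset.mem_univ i))⟩

theorem SameOrderType.of_forall_or {v w : ι → Q} (h : SameOrderType v w) {x y : Q}
    (hxy : ∀ i, cmp (v i) x = cmp (w i) y) {v' w' : κ → Q}
    (hv' : ∀ k, (∃ i, v' k = v i ∧ w' k = w i) ∨ (v' k = x ∧ w' k = y)) :
    SameOrderType v' w' := by
  intro k l
  rcases hv' k with ⟨i, hk, hk'⟩ | ⟨hk, hk'⟩ <;> rcases hv' l with ⟨j, hl, hl'⟩ | ⟨hl, hl'⟩ <;>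
    rw [hk, hk', hl, hl']
  · exact h i j
  · exact hxy i
  · rw [← cmp_swap, hxy j, cmp_swap]
  · rw [cmp_self_eq_eq, cmp_self_eq_eq]

theorem sameOrderType_ite {v : ι → Q} {q q' : Q}
    (h : ∀ i, v i ≠ q → cmp (v i) q = cmp (v i) q') :
    SameOrderType v (fun i => if v i = q then q' else v i) := by
  intro i j
  by_cases hi : v i = q <;> by_cases hj : v j = q <;>
    simp only [hi, hj, if_true, if_false, cmp_self_eq_eq]
  · rw [← cmp_swap, h j hj, cmp_swap]
  · exact h i hi

end SameOrderType

section Definable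

variable {Q : Type*} [LinearOrder Q] {P : Set Q}

theorem exists_forall_realize_eq_sumElim {ι : Type*} (t : (Language.order[[P]]).Term ι) :
    ∃ k : ι ⊕ P, ∀ v : ι → Q, t.realize v = Sum.elim v (↑) k := by
  cases t with
  | var i => exact ⟨Sum.inl i, fun _ => rfl⟩
  | @func l f ts =>
    cases f with
    | inl f => exact isEmptyElim f
    | inr c =>
      cases l with
      | zero => exact ⟨Sum.inr c, fun _ => rfl⟩
      | succ l => exact isEmptyElim c

theorem SameOrderType.snoc {α : Type*} {l : ℕ} {u v : α → Q} {xs ys : Fin l → Q}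
    (h : SameOrderType (Sum.elim (Sum.elim u xs) ((↑) : P → Q)) (Sum.elim (Sum.elim v ys) (↑)))
    {x y : Q} (hxy : ∀ i, cmp (Sum.elim (Sum.elim u xs) ((↑) : P → Q) i) x =
      cmp (Sum.elim (Sum.elim v ys) ((↑) : P → Q) i) y) :
    SameOrderType (Sum.elim (Sum.elim u (Fin.snoc xs x)) ((↑) : P → Q))
      (Sum.elim (Sum.elim v (Fin.snoc ys y)) (↑)) := by
  refine h.of_forall_or hxy ?_
  rintro ((a | i) | p)
  · exact Or.inl ⟨Sum.inl (Sum.inl a), rfl, rfl⟩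
  · induction i using Fin.lastCases with
    | last => exact Or.inr ⟨by simp, by simp⟩
    | cast i => exact Or.inl ⟨Sum.inl (Sum.inr i), by simp, by simp⟩
  · exact Or.inl ⟨Sum.inr p, rfl, rfl⟩

theorem FirstOrder.Language.BoundedFormula.realize_iff_of_sameOrderType [DenselyOrdered Q]
    [NoMinOrder Q] [NoMaxOrder Q] [Nonempty Q] (hP : P.Finite) {α : Type*} [Finite α] {l : ℕ}
    (φ : (Language.order[[P]]).BoundedFormula α l) {u v : α → Q} {xs ys : Fin l → Q}
    (h : SameOrderType (Sum.elim (Sum.elim u xs) ((↑) : P → Q)) (Sum.elim (Sum.elim v ys) (↑))) :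
    φ.Realize u xs ↔ φ.Realize v ys := by
  have := hP.to_subtype
  induction φ with
  | falsum => rfl
  | equal t₁ t₂ =>
    obtain ⟨i, hi⟩ := exists_forall_realize_eq_sumElim t₁
    obtain ⟨j, hj⟩ := exists_forall_realize_eq_sumElim t₂
    simp only [BoundedFormula.Realize, hi, hj]
    exact eq_iff_eq_of_cmp_eq_cmp (h i j)
  | rel R ts =>
    cases R with
    | inl R =>
      cases R
      obtain ⟨i, hi⟩ := exists_forall_realize_eq_sumElim (ts 0)
      obtain ⟨j, hj⟩ := exists_forall_realize_eq_sumElim (ts 1)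
      change (ts 0).realize _ ≤ (ts 1).realize _ ↔ (ts 0).realize _ ≤ (ts 1).realize _
      rw [hi, hi, hj, hj]
      exact le_iff_le_of_cmp_eq_cmp (h i j)
    | inr R => exact isEmptyElim R
  | imp φ ψ ihφ ihψ => exact imp_congr (ihφ h) (ihψ h)
  | all φ ih =>
    simp only [BoundedFormula.realize_all]
    constructor
    · intro hall y
      obtain ⟨x, hx⟩ := h.symm.exists_cmp_eq y
      exact (ih (h.snoc fun i => (hx i).symm)).1 (hall x)
    · intro hall x
      obtain ⟨y, hy⟩ := h.exists_cmp_eq x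
      exact (ih (h.snoc hy)).2 (hall y)

theorem Set.Definable.mem_of_sameOrderType [DenselyOrdered Q] [NoMinOrder Q] [NoMaxOrder Q]
    [Nonempty Q] (hP : P.Finite) {α : Type*} [Finite α] {s : Set (α → Q)}
    (hs : P.Definable Language.order s) {v w : α → Q}
    (h : SameOrderType (Sum.elim v ((↑) : P → Q)) (Sum.elim w (↑))) (hv : v ∈ s) : w ∈ s := by
  obtain ⟨φ, rfl⟩ := hs
  have hval (v : α → Q) : Sum.elim (Sum.elim v (default : Fin 0 → Q)) ((↑) : P → Q) =
      Sum.elim v (↑) ∘ Sum.map (Sum.elim id finZeroElim) id := by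
    ext ((a | i) | p)
    · rfl
    · exact i.elim0
    · rfl
  refine (φ.realize_iff_of_sameOrderType hP ?_).1 hv
  rw [hval, hval]
  exact h.comp _

end Definable

section DLO

variable {Q : Type*} [LinearOrder Q] [DenselyOrdered Q] [NoMinOrder Q] [NoMaxOrder Q] [Nonempty Q]

theorem exists_ne_forall_cmp_eq {E : Set Q} (hE : E.Finite) {q : Q} (hq : q ∉ E) :
    ∃ q' ≠ q, ∀ e ∈ E, cmp e q = cmp e q' := by
  classical
  obtain ⟨q', hlo, hq'⟩ :=
    Order.exists_between_finsets (hE.toFinset.filter (· < q)) {q} (by simp)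
  have hq'q : q' < q := hq' q (Finset.mem_singleton_self q)
  refine ⟨q', hq'q.ne, fun e he => ?_⟩
  rcases lt_trichotomy e q with h | rfl | h
  · rw [(cmp_eq_lt_iff _ _).2 h, (cmp_eq_lt_iff _ _).2 (hlo e (by simp [he, h]))]
  · exact absurd he hq
  · rw [(cmp_eq_gt_iff _ _).2 h, (cmp_eq_gt_iff _ _).2 (hq'q.trans h)]

/-- Any other value `q` of `f x` could be moved to a nearby `q'` without changing the order type
of the point `(x, f x)` of the graph over `P`; the moved point would still lie on the graph. -/
theorem apply_mem_range_union_of_definable_graphOn {P : Set Q} (hP : P.Finite) {n m : ℕ}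
    {D : Set (Fin n → Q)} {f : (Fin n → Q) → (Fin m → Q)}
    (hf : P.Definable Language.order (graphOn D f)) {x : Fin n → Q} (hx : x ∈ D) (j : Fin m) :
    f x j ∈ Set.range x ∪ P := by
  classical
  by_contra hq
  set q := f x j
  set z := Fin.append x (f x)
  obtain ⟨q', hq'q, hq'⟩ :=
    exists_ne_forall_cmp_eq (((Set.finite_range z).union hP).sdiff (t := {q})) fun h => h.2 rfl
  set r : Q → Q := fun e => if e = q then q' else e
  have hr : r ∘ z ∈ graphOn D f := by
    refine hf.mem_of_sameOrderType hP ?_ (append_mem_graphOn_iff.2 ⟨hx, rfl⟩)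
    have hparam : Sum.elim (r ∘ z) ((↑) : P → Q) =
        fun k => if Sum.elim z (↑) k = q then q' else Sum.elim z (↑) k := by
      ext (i | p)
      · rfl
      · exact (if_neg fun h : (p : Q) = q => hq (Or.inr (h ▸ p.2))).symm
    rw [hparam]
    refine sameOrderType_ite fun k hk => hq' _ ⟨?_, hk⟩
    rcases k with i | p
    · exact Or.inl ⟨i, rfl⟩
    · exact Or.inr p.2
  have hrx : r ∘ x = x := funext fun i => if_neg fun h => hq (Or.inl ⟨i, h⟩)
  rw [Fin.comp_append, hrx, append_mem_graphOn_iff] at hr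
  have hrq := congrFun hr.2 j
  simp only [Function.comp_apply, r] at hrq
  rw [if_pos rfl] at hrq
  exact hq'q hrq

end DLO

theorem Set.InjOn.eq_of_iterate_eq {X : Type*} {f : X → X} {S : Set X} (hf : S.InjOn f)
    {m : ℕ} {x y : X} (hx : ∀ i < m, f^[i] x ∈ S) (hy : ∀ i < m, f^[i] y ∈ S)
    (h : f^[m] x = f^[m] y) : x = y := by
  induction m with
  | zero => exact h
  | succ m ih =>
    rw [Function.iterate_succ_apply', Function.iterate_succ_apply'] at h
    exact ih (fun i hi => hx i (by omega)) (fun i hi => hy i (by omega))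
      (hf (hx m m.lt_succ_self) (hy m m.lt_succ_self) h)

theorem Set.MapsTo.iterate_mem {X : Type*} {f : X → X} {S T : Set X} (hf : Set.MapsTo f S T)
    {k : ℕ} (hk : 0 < k) {x : X} (hx : ∀ i < k, f^[i] x ∈ S) : f^[k] x ∈ T := by
  obtain ⟨k, rfl⟩ := Nat.exists_eq_add_one_of_ne_zero hk.ne'
  rw [Function.iterate_succ_apply']
  exact hf (hx k k.lt_succ_self)

section Cancellation

variable {X : Type*} {A B C : Set X} {f : X → X} {N : ℕ}

def ReachesVia (f : X → X) (C B : Set X) (x : X) (k : ℕ) : Prop :=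
  0 < k ∧ f^[k] x ∈ B ∧ ∀ i, 0 < i → i < k → f^[i] x ∈ C

theorem forall_iterate_mem_union {x : X} {k : ℕ} (hx : x ∈ A ∪ C)
    (hC : ∀ i, 0 < i → i < k → f^[i] x ∈ C) : ∀ i < k, f^[i] x ∈ A ∪ C := by
  intro i hi
  rcases i.eq_zero_or_pos with rfl | hi₀
  · exact hx
  · exact Or.inr (hC i hi₀ hi)

theorem ReachesVia.of_apply {x : X} {k : ℕ} (h : ReachesVia f C B (f x) k) (hx : f x ∈ C) :
    ReachesVia f C B x (k + 1) := by
  refine ⟨k.succ_pos, by rw [Function.iterate_succ_apply]; exact h.2.1, fun i hi hik => ?_⟩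
  obtain ⟨i, rfl⟩ := Nat.exists_eq_add_one_of_ne_zero hi.ne'
  rw [Function.iterate_succ_apply]
  rcases i.eq_zero_or_pos with rfl | hi'
  · exact hx
  · exact h.2.2 i hi' (by omega)

theorem ReachesVia.injOn_iterate (hAB : Disjoint A B) (hBC : Disjoint B C) {x : X} {k : ℕ}
    (h : ReachesVia f C B x k) (hx : x ∈ A ∪ C) : (Set.Iic k).InjOn (f^[·] x) := by
  intro i hi j hj hij
  by_contra hne
  wlog hlt : i < j generalizing i j
  · exact this hj hi hij.symm (Ne.symm hne) (by omega)
  have hjk := Set.mem_Iic.1 hj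
  have hB : f^[k - j + i] x ∈ B := by
    rw [Function.iterate_add_apply, show f^[i] x = f^[j] x from hij,
      ← Function.iterate_add_apply, Nat.sub_add_cancel hjk]
    exact h.2.1
  rcases forall_iterate_mem_union hx h.2.2 (k - j + i) (by omega) with hA | hC
  · exact Set.disjoint_left.1 hAB hA hB
  · exact Set.disjoint_left.1 hBC hB hC

/-- A repetition would, after cancelling with injectivity, send `x` into `B ∪ C`. -/
theorem injOn_iterate_of_mem (hinj : Set.InjOn f (A ∪ C)) (hmaps : Set.MapsTo f (A ∪ C) (B ∪ C))
    (hA : Disjoint A (B ∪ C))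
    {x : X} (hx : x ∈ A) {k : ℕ} (hpath : ∀ i < k, f^[i] x ∈ A ∪ C) :
    (Set.Iic k).InjOn (f^[·] x) := by
  intro i hi j hj hij
  by_contra hne
  wlog hlt : i < j generalizing i j
  · exact this hj hi hij.symm (Ne.symm hne) (by omega)
  simp only [Set.mem_Iic] at hi hj hij
  obtain ⟨d, rfl⟩ := Nat.exists_eq_add_of_lt hlt
  have hxd : x = f^[d + 1] x := by
    refine hinj.eq_of_iterate_eq (m := i) (fun l hl => hpath l (by omega))
      (fun l hl => ?_) ?_
    · rw [← Function.iterate_add_apply]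
      exact hpath _ (by omega)
    · rw [← Function.iterate_add_apply, hij, add_assoc]
  have hmem : f^[d + 1] x ∈ B ∪ C :=
    hmaps.iterate_mem d.succ_pos fun l hl => hpath l (by omega)
  exact Set.disjoint_left.1 hA hx (hxd ▸ hmem)

def InjOrbitsBounded (f : X → X) (D : Set X) (N : ℕ) : Prop :=
  ∀ x k, (∀ i < k, f^[i] x ∈ D) → (Set.Iic k).InjOn (f^[·] x) → k < N

theorem exists_reachesVia_lt (hinj : Set.InjOn f (A ∪ C))
    (hmaps : Set.MapsTo f (A ∪ C) (B ∪ C)) (hAB : Disjoint A B) (hAC : Disjoint A C)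
    (hBC : Disjoint B C) (hN : InjOrbitsBounded f (A ∪ C) N) {x : X} (hx : x ∈ A) :
    ∃ k < N, ReachesVia f C B x k := by
  classical
  have hexit : ∃ k, 0 < k ∧ f^[k] x ∉ C := by
    by_contra! hC
    have hpath := forall_iterate_mem_union (Or.inl hx) fun i hi (_ : i < N) => hC i hi
    exact (hN x N hpath <| injOn_iterate_of_mem hinj hmaps
      (Set.disjoint_union_right.2 ⟨hAB, hAC⟩) hx hpath).false
  set k := Nat.find hexit
  have hk : 0 < k := (Nat.find_spec hexit).1
  have hC : ∀ i, 0 < i → i < k → f^[i] x ∈ C :=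
    fun i hi hik => by_contra fun h => Nat.find_min hexit hik ⟨hi, h⟩
  have hpath := forall_iterate_mem_union (Or.inl hx) hC
  have hB : f^[k] x ∈ B :=
    (hmaps.iterate_mem hk hpath).resolve_right (Nat.find_spec hexit).2
  have h : ReachesVia f C B x k := ⟨hk, hB, hC⟩
  exact ⟨k, hN x k hpath (h.injOn_iterate hAB hBC (Or.inl hx)), h⟩

open Classical in
noncomputable def firstHit (f : X → X) (B : Set X) (x : X) : X :=
  if h : ∃ k, 0 < k ∧ f^[k] x ∈ B then f^[Nat.find h] x else x

theorem firstHit_eq (hBC : Disjoint B C) {x : X} {k : ℕ} (h : ReachesVia f C B x k) :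
    firstHit f B x = f^[k] x := by
  classical
  have hex : ∃ k, 0 < k ∧ f^[k] x ∈ B := ⟨k, h.1, h.2.1⟩
  rw [firstHit, dif_pos hex]
  congr 1
  refine le_antisymm (Nat.find_min' hex ⟨h.1, h.2.1⟩) (not_lt.1 fun hlt => ?_)
  exact Set.disjoint_left.1 hBC (Nat.find_spec hex).2 (h.2.2 _ (Nat.find_spec hex).1 hlt)

theorem mapsTo_firstHit (hinj : Set.InjOn f (A ∪ C)) (hmaps : Set.MapsTo f (A ∪ C) (B ∪ C))
    (hAB : Disjoint A B) (hAC : Disjoint A C) (hBC : Disjoint B C)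
    (hN : InjOrbitsBounded f (A ∪ C) N) :
    Set.MapsTo (firstHit f B) A B := by
  intro x hx
  obtain ⟨k, -, hk⟩ := exists_reachesVia_lt hinj hmaps hAB hAC hBC hN hx
  rw [firstHit_eq hBC hk]
  exact hk.2.1

theorem injOn_firstHit (hinj : Set.InjOn f (A ∪ C)) (hmaps : Set.MapsTo f (A ∪ C) (B ∪ C))
    (hAB : Disjoint A B) (hAC : Disjoint A C) (hBC : Disjoint B C)
    (hN : InjOrbitsBounded f (A ∪ C) N) :
    Set.InjOn (firstHit f B) A := by
  intro x hx y hy hxy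
  obtain ⟨k, -, hk⟩ := exists_reachesVia_lt hinj hmaps hAB hAC hBC hN hx
  obtain ⟨l, -, hl⟩ := exists_reachesVia_lt hinj hmaps hAB hAC hBC hN hy
  rw [firstHit_eq hBC hk, firstHit_eq hBC hl] at hxy
  wlog hkl : k ≤ l generalizing x y k l
  · exact (this hy hx l hl k hxy.symm hk (by omega)).symm
  obtain ⟨d, rfl⟩ := Nat.exists_eq_add_of_le hkl
  have hxd : x = f^[d] y := by
    refine hinj.eq_of_iterate_eq (forall_iterate_mem_union (Or.inl hx) hk.2.2)
      (fun i hi => ?_) (by rw [← Function.iterate_add_apply, hxy, add_comm])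
    rw [← Function.iterate_add_apply]
    exact forall_iterate_mem_union (Or.inl hy) hl.2.2 _ (by omega)
  rcases d.eq_zero_or_pos with rfl | hd
  · exact hxd
  · exact absurd (hxd ▸ hl.2.2 d hd (by have := hk.1; omega)) (Set.disjoint_left.1 hAC hx)

/-- The preimage of `b` is the start `c ∈ A` of the longest `f`-chain through `C` ending at `b`;
such chains are injective, hence shorter than `N`. -/
theorem surjOn_firstHit (hf : Set.SurjOn f (A ∪ C) (B ∪ C)) (hAB : Disjoint A B)
    (hBC : Disjoint B C) (hN : InjOrbitsBounded f (A ∪ C) N) :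
    Set.SurjOn (firstHit f B) A B := by
  classical
  intro b hb
  let Reach (k : ℕ) : Prop := ∃ c ∈ A ∪ C, ReachesVia f C B c k ∧ f^[k] c = b
  have hbound (k : ℕ) (hk : Reach k) : k < N := by
    obtain ⟨c, hc, hck, -⟩ := hk
    exact hN c k (forall_iterate_mem_union hc hck.2.2) (hck.injOn_iterate hAB hBC hc)
  have hreach₁ : Reach 1 := by
    obtain ⟨c, hc, rfl⟩ := hf (Or.inl hb)
    exact ⟨c, hc, ⟨one_pos, hb, fun i hi hi₁ => by omega⟩, rfl⟩
  obtain ⟨c, hc, hk, hcb⟩ := Nat.findGreatest_spec (hbound 1 hreach₁).le hreach₁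
  refine ⟨c, hc.resolve_right fun hcC => ?_, by rw [firstHit_eq hBC hk, hcb]⟩
  obtain ⟨c', hc', rfl⟩ := hf (Or.inr hcC)
  have hreach : Reach (Nat.findGreatest Reach N + 1) :=
    ⟨c', hc', hk.of_apply hcC, by rw [Function.iterate_succ_apply, hcb]⟩
  have := Nat.le_findGreatest (hbound _ hreach).le hreach
  omega

theorem bijOn_firstHit (hf : Set.BijOn f (A ∪ C) (B ∪ C)) (hAB : Disjoint A B)
    (hAC : Disjoint A C) (hBC : Disjoint B C) (hN : InjOrbitsBounded f (A ∪ C) N) :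
    Set.BijOn (firstHit f B) A B :=
  ⟨mapsTo_firstHit hf.injOn hf.mapsTo hAB hAC hBC hN,
    injOn_firstHit hf.injOn hf.mapsTo hAB hAC hBC hN, surjOn_firstHit hf.surjOn hAB hBC hN⟩

end Cancellation

section Tuples

variable {M : Type*} {n : ℕ}

theorem graphOn_firstHit_eq {A B C : Set (Fin n → M)} {f : (Fin n → M) → (Fin n → M)} {N : ℕ}
    (hinj : Set.InjOn f (A ∪ C)) (hmaps : Set.MapsTo f (A ∪ C) (B ∪ C)) (hAB : Disjoint A B)
    (hAC : Disjoint A C) (hBC : Disjoint B C) (hN : InjOrbitsBounded f (A ∪ C) N) :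
    graphOn A (firstHit f B) =
      ⋃ k ∈ Finset.range N, graphOn {x | x ∈ A ∧ ReachesVia f C B x (k + 1)} f^[k + 1] := by
  ext z
  simp only [graphOn, Set.mem_iUnion, Set.mem_ofPred_eq, Finset.mem_range, exists_prop]
  constructor
  · rintro ⟨x, hx, rfl⟩
    obtain ⟨k, hkN, hk⟩ := exists_reachesVia_lt hinj hmaps hAB hAC hBC hN hx
    obtain ⟨k, rfl⟩ := Nat.exists_eq_add_one_of_ne_zero hk.1.ne'
    exact ⟨k, by omega, x, ⟨hx, hk⟩, by rw [firstHit_eq hBC hk]⟩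
  · rintro ⟨k, -, x, ⟨hx, hk⟩, rfl⟩
    exact ⟨x, hx, by rw [firstHit_eq hBC hk]⟩

theorem setOf_mem_and_reachesVia_succ (A B C : Set (Fin n → M)) (f : (Fin n → M) → (Fin n → M))
    (k : ℕ) : {x | x ∈ A ∧ ReachesVia f C B x (k + 1)} =
      {x | ∀ i ≤ k + 1, f^[i] x ∈ if i = 0 then A else if i ≤ k then C else B} := by
  ext x
  simp only [Set.mem_ofPred_eq, ReachesVia]
  constructor
  · rintro ⟨hx, -, hB, hC⟩ i hi
    split_ifs with h₀ hik
    · subst h₀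
      exact hx
    · exact hC i (by omega) (by omega)
    · rwa [show i = k + 1 by omega]
  · intro h
    refine ⟨by simpa using h 0 (by omega), k.succ_pos, by simpa using h (k + 1) le_rfl,
      fun i hi hik => ?_⟩
    simpa [hi.ne', show i ≤ k by omega] using h i hik.le

theorem iterate_apply_mem_range_union {P : Set M} {D : Set (Fin n → M)}
    {f : (Fin n → M) → (Fin n → M)} (hf : ∀ x ∈ D, ∀ j, f x j ∈ Set.range x ∪ P)
    {x : Fin n → M} : ∀ {k}, (∀ i < k, f^[i] x ∈ D) → ∀ j, f^[k] x j ∈ Set.range x ∪ P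
  | 0, _, j => Or.inl ⟨j, rfl⟩
  | k + 1, hpath, j => by
    rw [Function.iterate_succ_apply']
    rcases hf _ (hpath k k.lt_succ_self) j with ⟨i, hi⟩ | hp
    · exact hi ▸ iterate_apply_mem_range_union hf (fun i hi => hpath i (by omega)) i
    · exact Or.inr hp

/-- The points of an orbit segment starting at `x` have all their coordinates in
`Set.range x ∪ P`, a set of at most `n + #P` elements. -/
theorem exists_injOrbitsBounded {P : Set M} (hP : P.Finite) {D : Set (Fin n → M)}
    {f : (Fin n → M) → (Fin n → M)} (hf : ∀ x ∈ D, ∀ j, f x j ∈ Set.range x ∪ P) :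
    ∃ N, InjOrbitsBounded f D N := by
  classical
  refine ⟨(n + hP.toFinset.card) ^ n, fun x k hpath hinj => ?_⟩
  set S := Finset.univ.image x ∪ hP.toFinset
  have hmaps : ∀ i ∈ Finset.Iic k, f^[i] x ∈ Fintype.piFinset fun _ => S := by
    intro i hi
    rw [Fintype.mem_piFinset]
    intro j
    rw [Finset.mem_Iic] at hi
    rcases iterate_apply_mem_range_union hf (k := i) (fun l hl => hpath l (by omega)) j with
      ⟨j', hj'⟩ | hp
    · exact Finset.mem_union_left _ (Finset.mem_image.2 ⟨j', Finset.mem_univ _, hj'⟩)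
    · exact Finset.mem_union_right _ (hP.mem_toFinset.2 hp)
  have hcard := Finset.card_le_card_of_injOn _ hmaps (by simpa using hinj)
  rw [Nat.card_Iic, Fintype.card_piFinset] at hcard
  calc k < k + 1 := k.lt_succ_self
    _ ≤ S.card ^ n := by simpa using hcard
    _ ≤ (n + hP.toFinset.card) ^ n := by
      refine Nat.pow_le_pow_left ((Finset.card_union_le _ _).trans ?_) n
      gcongr
      simpa using Finset.card_image_le (s := Finset.univ) (f := x)

end Tuples

section Definability

variable {L : Language} {M : Type*} [L.Structure M] {P : Set M} {n : ℕ}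

/-- The graph is the projection, onto the first and the last row, of the set of `(k + 1)`-row
matrices whose `i`-th row lies in `S i` and whose consecutive rows lie on the graph of `f`. -/
theorem definable_graphOn_iterate {D : Set (Fin n → M)} {f : (Fin n → M) → (Fin n → M)}
    (hf : P.Definable L (graphOn D f)) {k : ℕ} {S : ℕ → Set (Fin n → M)}
    (hS : ∀ i ≤ k, P.Definable L (S i)) (hSD : ∀ i < k, S i ⊆ D) :
    P.Definable L (graphOn {x | ∀ i ≤ k, f^[i] x ∈ S i} f^[k]) := by
  let paths : Set (Fin (k + 1) × Fin n → M) :=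
    (⋂ i : Fin k, (· ∘ Fin.append (Prod.mk i.castSucc) (Prod.mk i.succ)) ⁻¹' graphOn D f) ∩
      ⋂ i : Fin (k + 1), (· ∘ Prod.mk i) ⁻¹' S i
  have hpaths : P.Definable L paths :=
    (Set.definable_iInter_of_finite fun _ => hf.preimage_comp _).inter
      (Set.definable_iInter_of_finite fun i => (hS i i.is_le).preimage_comp _)
  convert hpaths.image_comp (Fin.append (Prod.mk 0) (Prod.mk (Fin.last k))) using 1
  ext z
  simp only [paths, Set.mem_image, Set.mem_inter_iff, Set.mem_iInter, Set.mem_preimage,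
    Fin.comp_append]
  constructor
  · rintro ⟨x, hx, rfl⟩
    refine ⟨Function.uncurry fun i : Fin (k + 1) => f^[i] x, ⟨fun i => ?_, fun i => hx i i.is_le⟩,
      rfl⟩
    refine append_mem_graphOn_iff.2 ⟨hSD i i.is_lt (hx i i.castSucc.is_le), ?_⟩
    exact Function.iterate_succ_apply' f i x
  · rintro ⟨W, ⟨hlink, hrow⟩, rfl⟩
    have hW (i : Fin (k + 1)) : W ∘ Prod.mk i = f^[i] (W ∘ Prod.mk 0) := by
      induction i using Fin.induction with
      | zero => rfl
      | succ i ih =>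
        rw [(append_mem_graphOn_iff.1 (hlink i)).2, ih, Fin.val_succ,
          Function.iterate_succ_apply', Fin.val_castSucc]
    refine ⟨W ∘ Prod.mk 0, fun i hi => ?_, by rw [hW (Fin.last k), Fin.val_last]⟩
    have hi' := hrow ⟨i, Nat.lt_succ_of_le hi⟩
    rwa [hW] at hi'

end Definability

/-- The Grothendieck semiring of a DLO without endpoints is cancellative. -/
theorem dlo_cancellative {Q : Type*} [LinearOrder Q] [DenselyOrdered Q] [NoMinOrder Q]
    [NoMaxOrder Q] [Nonempty Q] {n : ℕ} (A B C : Set (Fin n → Q))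
    (hA : DLODefinable A) (hB : DLODefinable B) (hC : DLODefinable C)
    (hAB : Disjoint A B) (hAC : Disjoint A C) (hBC : Disjoint B C)
    (h : DefBij (A ∪ C) (B ∪ C)) : DefBij A B := by
  obtain ⟨f, hf, PG, hPG, hG⟩ := h
  obtain ⟨PA, hPA, hA⟩ := hA
  obtain ⟨PB, hPB, hB⟩ := hB
  obtain ⟨PC, hPC, hC⟩ := hC
  obtain ⟨P, hP, hAP, hBP, hCP, hGP⟩ :
      ∃ P : Set Q, P.Finite ∧ PA ⊆ P ∧ PB ⊆ P ∧ PC ⊆ P ∧ PG ⊆ P :=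
    ⟨PA ∪ PB ∪ PC ∪ PG, ((hPA.union hPB).union hPC).union hPG, by tauto_set⟩
  replace hA := hA.mono hAP
  replace hB := hB.mono hBP
  replace hC := hC.mono hCP
  replace hG := hG.mono hGP
  obtain ⟨N, hN⟩ := exists_injOrbitsBounded hP
    fun x hx j => apply_mem_range_union_of_definable_graphOn hP hG hx j
  refine ⟨firstHit f B, bijOn_firstHit hf hAB hAC hBC hN, P, hP, ?_⟩
  rw [graphOn_firstHit_eq hf.injOn hf.mapsTo hAB hAC hBC hN]
  refine Set.definable_biUnion_finset (fun k => ?_) _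
  rw [setOf_mem_and_reachesVia_succ]
  refine definable_graphOn_iterate hG (fun i _ => ?_) (fun i hi => ?_)
  · split_ifs <;> assumption
  · split_ifs
    · exact Set.subset_union_left
    · exact Set.subset_union_right
    · omega
end

section
/- Let Q be a nonempty dense linear order without endpoints, let A ⊆ Q be a finite parameter set, and let D₁, D₂ ⊆ Q^n be A-definable sets. Define the height H(D) of a set D ⊆ Q^n as the maximum, over points x ∈ D, of the number of distinct values among the coordinates x_1,…,x_n that do not belong to A (with H(∅) = 0). If H(D₁) ≠ H(D₂), then there is no definable bijection from D₁ onto D₂. -/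
open FirstOrder FirstOrder.Language

attribute [local instance] FirstOrder.Language.orderStructure

/-- The height of `D ⊆ Q^n` relative to a parameter set `A`: the maximum over `x ∈ D` of the
number of distinct coordinate values of `x` not lying in `A` (`0` for the empty set). -/
noncomputable def height {Q : Type*} {n : ℕ} (A : Set Q) (D : Set (Fin n → Q)) : ℕ :=
  sSup ((fun x : Fin n → Q => Set.ncard {q : Q | (∃ i, x i = q) ∧ q ∉ A}) '' D)

/-!
Over a finite parameter set `A`, whether a tuple lies in an `A`-definable set depends only on its
order type over `A`: by the back-and-forth property of dense orders without endpoints, tuples of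
the same order type satisfy the same formulas. Hence enlarging `A` to a finite `B` does not change
the height of an `A`-definable set, because the coordinates of a point outside `A` can be moved
off `B` without changing its order type over `A`. If moreover the graph of an injective map `f` is
`B`-definable, then `x` and `f x` take the same values outside `B`: a value outside `B` occurring
on one side only could be moved while the other side stays fixed, contradicting either that `f`
is a function or that it is injective. So a definable bijection preserves height over `B`.
-/

section DenseOrder

variable {Q : Type*} [LinearOrder Q] [DenselyOrdered Q] [NoMinOrder Q] [NoMaxOrder Q]

theorem exists_between_finite_notMem [Nonempty Q] {s t C : Set Q} (hs : s.Finite)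
    (ht : t.Finite) (hC : C.Finite) (hst : ∀ x ∈ s, ∀ y ∈ t, x < y) :
    ∃ b ∉ C, (∀ x ∈ s, x < b) ∧ ∀ y ∈ t, b < y := by
  rcases s.eq_empty_or_nonempty with rfl | hs₀ <;> rcases t.eq_empty_or_nonempty with rfl | ht₀
  · obtain ⟨b, -, hb⟩ := ((Set.Ioi_infinite (Classical.arbitrary Q)).sdiff hC).nonempty
    exact ⟨b, hb, by simp, by simp⟩
  · obtain ⟨M, hMt, hM⟩ := Set.exists_min_image t id ht ht₀
    obtain ⟨b, hbM, hb⟩ := ((Set.Iio_infinite M).sdiff hC).nonempty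
    exact ⟨b, hb, by simp, fun y hy => hbM.trans_le (hM y hy)⟩
  · obtain ⟨m, hms, hm⟩ := Set.exists_max_image s id hs hs₀
    obtain ⟨b, hmb, hb⟩ := ((Set.Ioi_infinite m).sdiff hC).nonempty
    exact ⟨b, hb, fun x hx => (hm x hx).trans_lt hmb, by simp⟩
  · obtain ⟨m, hms, hm⟩ := Set.exists_max_image s id hs hs₀
    obtain ⟨M, hMt, hM⟩ := Set.exists_min_image t id ht ht₀
    obtain ⟨b, ⟨hmb, hbM⟩, hb⟩ := ((Set.Ioo_infinite (hst m hms M hMt)).sdiff hC).nonempty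
    exact ⟨b, hb, fun x hx => (hm x hx).trans_lt hmb, fun y hy => hbM.trans_le (hM y hy)⟩

theorem StrictMonoOn.exists_update_insert {S C : Set Q} {h : Q → Q} (hh : StrictMonoOn h S)
    (hS : S.Finite) (hC : C.Finite) {t : Q} (ht : t ∉ S) :
    ∃ b ∉ C, StrictMonoOn (Function.update h t b) (insert t S) := by
  have : Nonempty Q := ⟨t⟩
  obtain ⟨b, hbC, hlt, hgt⟩ := exists_between_finite_notMem
    ((hS.subset (Set.sep_subset S (· < t))).image h)
    ((hS.subset (Set.sep_subset S (t < ·))).image h) hC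
    (by
      rintro _ ⟨p, ⟨hp, hpt⟩, rfl⟩ _ ⟨q, ⟨hq, htq⟩, rfl⟩
      exact hh hp hq (hpt.trans htq))
  have hEq : Set.EqOn (Function.update h t b) h S := fun p hp =>
    Function.update_of_ne (ne_of_mem_of_not_mem hp ht) _ _
  refine ⟨b, hbC, strictMonoOn_insert_iff.2 ⟨fun p hp hpt => ?_, fun p hp htp => ?_,
    hh.congr hEq.symm⟩⟩
  · rw [hEq hp, Function.update_self]
    exact hlt _ ⟨p, ⟨hp, hpt⟩, rfl⟩
  · rw [hEq hp, Function.update_self]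
    exact hgt _ ⟨p, ⟨hp, htp⟩, rfl⟩

theorem exists_strictMonoOn_eqOn_mapsTo {A T C : Set Q} (hA : A.Finite) (hT : T.Finite)
    (hC : C.Finite) :
    ∃ h : Q → Q, StrictMonoOn h (A ∪ T) ∧ Set.EqOn h id A ∧ Set.MapsTo h (T \ A) Cᶜ := by
  induction T, hT using Set.Finite.induction_on with
  | empty =>
    exact ⟨id, strictMono_id.strictMonoOn _, Set.eqOn_refl _ _, by simp [Set.mapsTo_empty]⟩
  | @insert t T htT hT ih =>
    obtain ⟨h, hmono, hfix, hmaps⟩ := ih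
    by_cases htA : t ∈ A
    · refine ⟨h, ?_, hfix, ?_⟩
      · rwa [Set.union_insert, Set.insert_eq_of_mem (Set.mem_union_left T htA)]
      · rwa [Set.insert_sdiff_of_mem _ htA]
    have htAT : t ∉ A ∪ T := by simp [htA, htT]
    obtain ⟨b, hbC, hmono'⟩ := hmono.exists_update_insert (hA.union hT) hC htAT
    have hEq : Set.EqOn (Function.update h t b) h (A ∪ T) := fun p hp =>
      Function.update_of_ne (ne_of_mem_of_not_mem hp htAT) _ _
    refine ⟨Function.update h t b, by rwa [Set.union_insert], fun p hp => ?_, ?_⟩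
    · rw [hEq (Or.inl hp), hfix hp]
    · rintro p ⟨rfl | hpT, hpA⟩
      · simpa using hbC
      · rw [hEq (Or.inr hpT)]
        exact hmaps ⟨hpT, hpA⟩

end DenseOrder

theorem FirstOrder.Language.Term.exists_eq_var {L : Language} [L.IsRelational] {α : Type*}
    (t : L.Term α) : ∃ i, t = var i := by
  cases t with
  | var i => exact ⟨i, rfl⟩
  | func f _ => exact isEmptyElim f

def SameOrder {Q ι : Type*} [LinearOrder Q] (u v : ι → Q) : Prop :=
  ∀ i j, u i ≤ u j ↔ v i ≤ v j

namespace SameOrder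

variable {Q ι : Type*} [LinearOrder Q] {u v : ι → Q}

theorem lt_iff (h : SameOrder u v) (i j : ι) : u i < u j ↔ v i < v j := by
  simp only [lt_iff_not_ge, h j i]

theorem eq_iff (h : SameOrder u v) (i j : ι) : u i = u j ↔ v i = v j := by
  simp only [le_antisymm_iff, h i j, h j i]

theorem exists_extend [DenselyOrdered Q] [NoMinOrder Q] [NoMaxOrder Q] [Finite ι]
    (h : SameOrder u v) (a : Q) : ∃ b, ∀ i, (u i ≤ a ↔ v i ≤ b) ∧ (a ≤ u i ↔ b ≤ v i) := by
  by_cases ha : ∃ i, u i = a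
  · obtain ⟨i, rfl⟩ := ha
    exact ⟨v i, fun j => ⟨h j i, h i j⟩⟩
  push Not at ha
  have : Nonempty Q := ⟨a⟩
  obtain ⟨b, -, hlt, hgt⟩ := exists_between_finite_notMem (C := ∅)
    ((Set.toFinite {i | u i < a}).image v) ((Set.toFinite {i | a < u i}).image v)
    Set.finite_empty
    (by
      rintro _ ⟨i, hi, rfl⟩ _ ⟨j, hj, rfl⟩
      exact (h.lt_iff i j).1 (hi.trans hj))
  refine ⟨b, fun i => ?_⟩
  rcases (ha i).lt_or_gt with hia | hai
  · have hib := hlt _ ⟨i, hia, rfl⟩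
    exact ⟨iff_of_true hia.le hib.le, iff_of_false hia.not_ge hib.not_ge⟩
  · have hbi := hgt _ ⟨i, hai, rfl⟩
    exact ⟨iff_of_false hai.not_ge hbi.not_ge, iff_of_true hai.le hbi.le⟩

theorem sumElim_snoc {γ : Type*} {k : ℕ} {V W : γ → Q} {xs ys : Fin k → Q} {a b : Q}
    (h : SameOrder (Sum.elim V xs) (Sum.elim W ys))
    (hab : ∀ i, (Sum.elim V xs i ≤ a ↔ Sum.elim W ys i ≤ b) ∧
      (a ≤ Sum.elim V xs i ↔ b ≤ Sum.elim W ys i)) :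
    SameOrder (Sum.elim V (Fin.snoc xs a)) (Sum.elim W (Fin.snoc ys b)) := by
  have hcases : ∀ i : γ ⊕ Fin (k + 1),
      (∃ i', Sum.elim V (Fin.snoc xs a) i = Sum.elim V xs i' ∧
        Sum.elim W (Fin.snoc ys b) i = Sum.elim W ys i') ∨
      (Sum.elim V (Fin.snoc xs a) i = a ∧ Sum.elim W (Fin.snoc ys b) i = b) := by
    rintro (g | i)
    · exact .inl ⟨.inl g, rfl, rfl⟩
    · induction i using Fin.lastCases with
      | last => exact .inr ⟨by simp, by simp⟩
      | cast i => exact .inl ⟨.inr i, by simp, by simp⟩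
  intro i j
  rcases hcases i with ⟨i, hi, hi'⟩ | ⟨hi, hi'⟩ <;>
    rcases hcases j with ⟨j, hj, hj'⟩ | ⟨hj, hj'⟩ <;> rw [hi, hi', hj, hj']
  · exact h i j
  · exact (hab i).1
  · exact (hab j).2
  · exact iff_of_true le_rfl le_rfl

end SameOrder

section Invariance

variable {Q : Type*} [LinearOrder Q] [DenselyOrdered Q] [NoMinOrder Q] [NoMaxOrder Q]

theorem FirstOrder.Language.BoundedFormula.realize_iff_of_sameOrder {γ : Type*} [Finite γ]
    {k : ℕ} (φ : Language.order.BoundedFormula γ k) {V W : γ → Q} {xs ys : Fin k → Q}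
    (h : SameOrder (Sum.elim V xs) (Sum.elim W ys)) : φ.Realize V xs ↔ φ.Realize W ys := by
  induction φ with
  | falsum => exact Iff.rfl
  | equal t₁ t₂ =>
    obtain ⟨i, rfl⟩ := t₁.exists_eq_var
    obtain ⟨j, rfl⟩ := t₂.exists_eq_var
    exact h.eq_iff i j
  | rel R ts =>
    cases R
    obtain ⟨i, hi⟩ := (ts 0).exists_eq_var
    obtain ⟨j, hj⟩ := (ts 1).exists_eq_var
    show (ts 0).realize (Sum.elim V xs) ≤ (ts 1).realize (Sum.elim V xs) ↔
      (ts 0).realize (Sum.elim W ys) ≤ (ts 1).realize (Sum.elim W ys)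
    rw [hi, hj]
    exact h i j
  | imp φ ψ ihφ ihψ => exact imp_congr (ihφ h) (ihψ h)
  | all φ ih =>
    refine ⟨fun hall b => ?_, fun hall a => ?_⟩
    · obtain ⟨a, ha⟩ := SameOrder.exists_extend (fun i j => (h i j).symm) b
      exact (ih (SameOrder.sumElim_snoc h fun i => ⟨(ha i).1.symm, (ha i).2.symm⟩)).1 (hall a)
    · obtain ⟨b, hb⟩ := h.exists_extend a
      exact (ih (SameOrder.sumElim_snoc h hb)).2 (hall b)

end Invariance

theorem StrictMonoOn.sameOrder_comp {Q ι : Type*} [LinearOrder Q] {u : ι → Q} {h : Q → Q}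
    (hh : StrictMonoOn h (Set.range u)) : SameOrder u (h ∘ u) :=
  fun i j => (hh.le_iff_le ⟨i, rfl⟩ ⟨j, rfl⟩).symm

namespace Set.Definable

variable {Q : Type*} [LinearOrder Q] [DenselyOrdered Q] [NoMinOrder Q] [NoMaxOrder Q]
  {A : Set Q} {α : Type*} [Finite α] {s : Set (α → Q)}

theorem mem_iff_of_sameOrder (hA : A.Finite) (hs : A.Definable Language.order s) {v w : α → Q}
    (h : SameOrder (Sum.elim ((↑) : A → Q) v) (Sum.elim (↑) w)) : v ∈ s ↔ w ∈ s := by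
  obtain ⟨φ, rfl⟩ := Set.definable_iff_exists_formula_sum.mp hs
  have : Finite A := hA
  refine φ.realize_iff_of_sameOrder ?_
  rintro (i | i) (j | j)
  · exact h i j
  all_goals exact Fin.elim0 (by assumption)

theorem comp_mem_iff (hA : A.Finite) (hs : A.Definable Language.order s) {h : Q → Q}
    {x : α → Q} (hmono : StrictMonoOn h (A ∪ Set.range x)) (hfix : Set.EqOn h id A) :
    h ∘ x ∈ s ↔ x ∈ s := by
  have hcomp : Sum.elim ((↑) : A → Q) (h ∘ x) = h ∘ Sum.elim (↑) x := by
    ext (a | i)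
    · exact (hfix a.2).symm
    · rfl
  refine (hs.mem_iff_of_sameOrder hA ?_).symm
  rw [hcomp]
  exact StrictMonoOn.sameOrder_comp (by rwa [Set.Sum.elim_range, Subtype.range_coe])

theorem exists_mem_move_value (hA : A.Finite) (hs : A.Definable Language.order s) {z : α → Q}
    (hz : z ∈ s) {q : Q} (hq : q ∉ A) :
    ∃ y ∈ s, (∀ i, z i ≠ q → y i = z i) ∧ ∀ i, z i = q → y i ≠ q := by
  -- the other values of `z` become parameters, so that only `q` can move
  set P := A ∪ (Set.range z \ {q})
  have hP : P.Finite := hA.union (Set.finite_range z).sdiff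
  obtain ⟨h, hmono, hfix, hmove⟩ :=
    exists_strictMonoOn_eqOn_mapsTo hP (Set.finite_singleton q) (Set.finite_singleton q)
  have hfix' : ∀ i, z i ≠ q → h (z i) = z i := fun i hi => hfix (Or.inr ⟨⟨i, rfl⟩, hi⟩)
  have hqP : q ∉ P := by simp [P, hq]
  have hmono' : StrictMonoOn h (P ∪ Set.range z) := hmono.mono <| by
    rintro _ (hp | ⟨i, rfl⟩)
    · exact Or.inl hp
    · by_cases hi : z i = q
      · exact Or.inr hi
      · exact Or.inl (Or.inr ⟨⟨i, rfl⟩, hi⟩)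
  refine ⟨h ∘ z, ((hs.mono Set.subset_union_left).comp_mem_iff hP hmono' hfix).2 hz, hfix', ?_⟩
  rintro i rfl
  exact hmove ⟨rfl, hqP⟩

end Set.Definable

section Height

variable {Q : Type*}

theorem ncard_range_sdiff_le {n : ℕ} (x : Fin n → Q) (A : Set Q) :
    (Set.range x \ A).ncard ≤ n :=
  calc (Set.range x \ A).ncard ≤ (Set.range x).ncard :=
        Set.ncard_le_ncard Set.sdiff_subset (Set.finite_range x)
    _ ≤ n := by simpa [Set.image_univ] using Set.ncard_image_le (f := x) Set.finite_univ

theorem height_le_height {n m : ℕ} {D₁ : Set (Fin n → Q)} {D₂ : Set (Fin m → Q)}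
    {A B : Set Q} (h : ∀ x ∈ D₁, ∃ y ∈ D₂, (Set.range x \ A).ncard ≤ (Set.range y \ B).ncard) :
    height A D₁ ≤ height B D₂ := by
  change sSup ((fun x => (Set.range x \ A).ncard) '' D₁) ≤
    sSup ((fun y => (Set.range y \ B).ncard) '' D₂)
  rcases D₁.eq_empty_or_nonempty with rfl | hD₁
  · simp
  refine csSup_le (hD₁.image _) ?_
  rintro _ ⟨x, hx, rfl⟩
  obtain ⟨y, hy, hxy⟩ := h x hx
  exact hxy.trans <| le_csSup ⟨m, Set.forall_mem_image.2 fun y _ => ncard_range_sdiff_le y B⟩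
    ⟨y, hy, rfl⟩

theorem height_eq_height_of_bijOn {n m : ℕ} {B : Set Q} {D₁ : Set (Fin n → Q)}
    {D₂ : Set (Fin m → Q)} {f : (Fin n → Q) → (Fin m → Q)} (hf : Set.BijOn f D₁ D₂)
    (hrange : ∀ x ∈ D₁, Set.range x \ B = Set.range (f x) \ B) : height B D₁ = height B D₂ := by
  refine le_antisymm (height_le_height fun x hx =>
    ⟨f x, hf.mapsTo hx, (congrArg Set.ncard (hrange x hx)).le⟩) (height_le_height fun y hy => ?_)
  obtain ⟨x, hx, rfl⟩ := hf.surjOn hy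
  exact ⟨x, hx, (congrArg Set.ncard (hrange x hx)).ge⟩

end Height

section DefinableHeight

variable {Q : Type*} [LinearOrder Q] [DenselyOrdered Q] [NoMinOrder Q] [NoMaxOrder Q]

theorem range_sdiff_eq_of_definable_graphOn {B : Set Q} (hB : B.Finite) {n m : ℕ}
    {D₁ : Set (Fin n → Q)} {f : (Fin n → Q) → (Fin m → Q)} (hf : Set.InjOn f D₁)
    (hG : B.Definable Language.order (graphOn D₁ f)) {x : Fin n → Q} (hx : x ∈ D₁) :
    Set.range x \ B = Set.range (f x) \ B := by
  suffices h : ∀ q ∉ B, q ∈ Set.range x ∨ q ∈ Set.range (f x) →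
      q ∈ Set.range x ∧ q ∈ Set.range (f x) by
    ext q
    exact ⟨fun ⟨hqx, hqB⟩ => ⟨(h q hqB (.inl hqx)).2, hqB⟩,
      fun ⟨hqf, hqB⟩ => ⟨(h q hqB (.inr hqf)).1, hqB⟩⟩
  intro q hqB hq
  by_contra hnot
  obtain ⟨y, ⟨x', hx', rfl⟩, hfixed, hmoved⟩ := hG.exists_mem_move_value hB ⟨x, hx, rfl⟩ hqB
  have hx'x : x' = x := by
    rcases not_and_or.1 hnot with hqx | hqf
    · funext i
      simpa using hfixed (Fin.castAdd m i) (by simpa using fun h => hqx ⟨i, h⟩)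
    · refine hf hx' hx (funext fun j => ?_)
      simpa using hfixed (Fin.natAdd n j) (by simpa using fun h => hqf ⟨j, h⟩)
  rw [hx'x] at hmoved
  rcases hq with ⟨i, hi⟩ | ⟨j, hj⟩
  · have hi' : Fin.append x (f x) (Fin.castAdd m i) = q := by simpa using hi
    exact hmoved _ hi' hi'
  · have hj' : Fin.append x (f x) (Fin.natAdd n j) = q := by simpa using hj
    exact hmoved _ hj' hj'

theorem height_eq_height_of_subset {n : ℕ} {A B : Set Q} (hA : A.Finite) (hB : B.Finite)
    (hAB : A ⊆ B) {D : Set (Fin n → Q)} (hD : A.Definable Language.order D) :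
    height A D = height B D := by
  refine le_antisymm (height_le_height fun x hx => ?_) (height_le_height fun x hx =>
    ⟨x, hx, Set.ncard_le_ncard (Set.sdiff_subset_sdiff_right hAB) (Set.finite_range x).sdiff⟩)
  obtain ⟨h, hmono, hfix, hmaps⟩ := exists_strictMonoOn_eqOn_mapsTo hA (Set.finite_range x) hB
  refine ⟨h ∘ x, (hD.comp_mem_iff hA hmono hfix).2 hx, ?_⟩
  have himage : h '' (Set.range x \ A) ⊆ Set.range (h ∘ x) \ B := by
    rintro _ ⟨_, ⟨⟨i, rfl⟩, hiA⟩, rfl⟩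
    exact ⟨⟨i, rfl⟩, hmaps ⟨⟨i, rfl⟩, hiA⟩⟩
  calc (Set.range x \ A).ncard = (h '' (Set.range x \ A)).ncard :=
        ((hmono.injOn.mono fun p hp => Or.inr hp.1).ncard_image).symm
    _ ≤ (Set.range (h ∘ x) \ B).ncard := Set.ncard_le_ncard himage (Set.finite_range _).sdiff

end DefinableHeight

theorem dlo_height_ne_no_defBij_general {Q : Type*} [LinearOrder Q] [DenselyOrdered Q] [NoMinOrder Q]
    [NoMaxOrder Q] {n : ℕ} (A : Finset Q) (D₁ D₂ : Set (Fin n → Q))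
    (h₁ : (A : Set Q).Definable Language.order D₁)
    (h₂ : (A : Set Q).Definable Language.order D₂)
    (hH : height (A : Set Q) D₁ ≠ height (A : Set Q) D₂) : ¬ DefBij D₁ D₂ := by
  rintro ⟨f, hf, A₀, hA₀, hG⟩
  have hB : ((A : Set Q) ∪ A₀).Finite := A.finite_toSet.union hA₀
  have hAB : (A : Set Q) ⊆ A ∪ A₀ := Set.subset_union_left
  apply hH
  rw [height_eq_height_of_subset A.finite_toSet hB hAB h₁,
    height_eq_height_of_subset A.finite_toSet hB hAB h₂]
  exact height_eq_height_of_bijOn hf fun x hx =>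
    range_sdiff_eq_of_definable_graphOn hB hf.injOn (hG.mono Set.subset_union_right) hx

/-- `A`-definable sets of different heights are not in definable bijection. -/
theorem dlo_height_ne_no_defBij {Q : Type*} [LinearOrder Q] [DenselyOrdered Q] [NoMinOrder Q]
    [NoMaxOrder Q] [Nonempty Q] {n : ℕ} (A : Finset Q) (D₁ D₂ : Set (Fin n → Q))
    (h₁ : (A : Set Q).Definable Language.order D₁)
    (h₂ : (A : Set Q).Definable Language.order D₂)
    (hH : height (A : Set Q) D₁ ≠ height (A : Set Q) D₂) : ¬ DefBij D₁ D₂ :=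
  dlo_height_ne_no_defBij_general A D₁ D₂ h₁ h₂ hH
end

section
/- Let Q be a nonempty dense linear order without endpoints and let D ⊆ Q^n be definable without parameters (∅-definable). If x, y ∈ Q^n satisfy x_i < x_j ⟺ y_i < y_j for all indices i, j, then x ∈ D if and only if y ∈ D. (Consequently, the nonempty sets of points realizing a fixed order pattern of the coordinates — the related sets — are exactly the atoms of the finite Boolean algebra of ∅-definable subsets of Q^n.) -/
open FirstOrder FirstOrder.Language

attribute [local instance] FirstOrder.Language.orderStructure

/-!
Two tuples with the same order pattern in a countable dense linear order without endpoints are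
conjugate under an order automorphism (ultrahomogeneity of the Fraïssé limit), and automorphisms
preserve the truth of formulas. For an arbitrary such order, invariance of a formula `φ` under
equality of order patterns is expressed by a single sentence; it holds in `ℚ`, so it holds in
every model of the complete theory of dense linear orders without endpoints.
-/

namespace FirstOrder.Language.order

instance orderedStructure_orderStructure {M : Type*} [LE M] :
    Language.order.OrderedStructure M :=
  ⟨fun _ => Iff.rfl⟩

variable {M : Type*} [LinearOrder M] {ι : Type*} [Finite ι]

theorem exists_orderIso_comp_eq [Countable M] [DenselyOrdered M] [NoMinOrder M] [NoMaxOrder M]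
    (u w : ι → M) (h : ∀ i j, u i ≤ u j ↔ w i ≤ w j) : ∃ g : M ≃o M, g ∘ u = w := by
  rcases isEmpty_or_nonempty M with hM | hM
  · exact ⟨OrderIso.refl M, Subsingleton.elim _ _⟩
  have hw : ∀ i j, u i = u j → w i = w j := fun i j hij =>
    le_antisymm ((h i j).1 hij.le) ((h j i).1 hij.ge)
  let f : Set.range u ↪o M := OrderEmbedding.ofMapLEIff (fun s => w (Set.rangeSplitting u s))
    fun s t => by
      rw [← h, Set.apply_rangeSplitting u, Set.apply_rangeSplitting u, Subtype.coe_le_coe]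
  let S : Language.order.Substructure M := Substructure.closure Language.order (Set.range u)
  let e : S ≃o Set.range u := OrderIso.setCongr _ _ (Substructure.closure_eq_of_isRelational _ _)
  -- `S` must carry the structure induced from `M`, not the one coming from its order.
  let : Language.order.Structure S := Substructure.inducedStructure
  obtain ⟨g, hg⟩ := (isFraisseLimit_of_countable_nonempty_dlo M).ultrahomogeneous S
    (Substructure.fg_closure (Set.finite_range u))
    (StrongHomClass.toEmbedding (e.toOrderEmbedding.trans f))
  let := StrongHomClass.toOrderIsoClass Language.order M M (M ≃[Language.order] M)
  refine ⟨g, funext fun i => ?_⟩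
  have hgu := congr($hg ⟨u i, Substructure.subset_closure (Set.mem_range_self i)⟩)
  exact hgu.symm.trans (hw _ _ (Set.apply_rangeSplitting u ⟨u i, Set.mem_range_self i⟩))

theorem realize_iff_of_le_iff_le_of_countable [Countable M] [DenselyOrdered M] [NoMinOrder M]
    [NoMaxOrder M] (φ : Language.order.Formula ι) {u w : ι → M}
    (h : ∀ i j, u i ≤ u j ↔ w i ≤ w j) : φ.Realize u ↔ φ.Realize w := by
  obtain ⟨g, rfl⟩ := exists_orderIso_comp_eq u w h
  exact (StrongHomClass.realize_formula g φ).symm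

noncomputable def samePatternFormula {α : Type*} (a b : ι → α) : Language.order.Formula α :=
  Formula.iInf fun ij : ι × ι =>
    ((var (Sum.inl (a ij.1))).le (var (Sum.inl (a ij.2)))).iff
      ((var (Sum.inl (b ij.1))).le (var (Sum.inl (b ij.2))))

@[simp]
theorem realize_samePatternFormula {α : Type*} (a b : ι → α) (v : α → M) :
    (samePatternFormula a b).Realize v ↔ ∀ i j, v (a i) ≤ v (a j) ↔ v (b i) ≤ v (b j) := by
  simp only [samePatternFormula, Formula.realize_iInf, Formula.realize_iff, Prod.forall]
  simp [Formula.Realize]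

noncomputable def patternInvarianceSentence (φ : Language.order.Formula ι) :
    Language.order.Sentence :=
  Formula.iAlls (ι ⊕ ι) ((samePatternFormula (Sum.inr ∘ Sum.inl) (Sum.inr ∘ Sum.inr)).imp
    ((φ.relabel (Sum.inr ∘ Sum.inl)).iff (φ.relabel (Sum.inr ∘ Sum.inr))))

theorem realize_patternInvarianceSentence (φ : Language.order.Formula ι) :
    M ⊨ patternInvarianceSentence φ ↔ ∀ u w : ι → M,
      (∀ i j, u i ≤ u j ↔ w i ≤ w j) → (φ.Realize u ↔ φ.Realize w) := by
  simp only [patternInvarianceSentence, Sentence.Realize, Formula.realize_iAlls,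
    Formula.realize_imp, Formula.realize_iff, Formula.realize_relabel, realize_samePatternFormula,
    Function.comp_def, Sum.elim_inr]
  exact ⟨fun H u w => H (Sum.elim u w), fun H v => H _ _⟩

theorem realize_iff_of_le_iff_le [DenselyOrdered M] [NoMinOrder M] [NoMaxOrder M]
    (φ : Language.order.Formula ι) {u w : ι → M} (h : ∀ i j, u i ≤ u j ↔ w i ≤ w j) :
    φ.Realize u ↔ φ.Realize w := by
  rcases isEmpty_or_nonempty M with hM | hM
  · rw [Subsingleton.elim u w]
  have hℚ : ℚ ⊨ patternInvarianceSentence φ := (realize_patternInvarianceSentence φ).2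
    fun _ _ => realize_iff_of_le_iff_le_of_countable φ
  have hσ := (dlo_isComplete.realize_sentence_iff _ M).2
    ((dlo_isComplete.realize_sentence_iff _ ℚ).1 hℚ)
  exact (realize_patternInvarianceSentence φ).1 hσ u w h

end FirstOrder.Language.order

theorem dlo_empty_definable_orderType_invariant_general {Q : Type*} [LinearOrder Q] [DenselyOrdered Q]
    [NoMinOrder Q] [NoMaxOrder Q] {n : ℕ} (D : Set (Fin n → Q))
    (hD : (∅ : Set Q).Definable Language.order D) (x y : Fin n → Q)
    (hxy : ∀ i j, x i < x j ↔ y i < y j) : x ∈ D ↔ y ∈ D := by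
  obtain ⟨φ, rfl⟩ := Set.empty_definable_iff.mp hD
  exact order.realize_iff_of_le_iff_le φ fun i j => by rw [← not_lt, ← not_lt, hxy]

/-- A `∅`-definable subset of `Q^n` is invariant under maps preserving the order pattern of
the coordinates. -/
theorem dlo_empty_definable_orderType_invariant {Q : Type*} [LinearOrder Q] [DenselyOrdered Q]
    [NoMinOrder Q] [NoMaxOrder Q] [Nonempty Q] {n : ℕ} (D : Set (Fin n → Q))
    (hD : (∅ : Set Q).Definable Language.order D) (x y : Fin n → Q)
    (hxy : ∀ i j, x i < x j ↔ y i < y j) : x ∈ D ↔ y ∈ D :=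
  dlo_empty_definable_orderType_invariant_general D hD x y hxy
end

section
/- Let Q be a nonempty dense linear order without endpoints, let a < c < b in Q, and for u < w in Q and j ≥ 0 let R_j(u,w) = {x ∈ Q^j : w > x_1 > x_2 > ⋯ > x_j > u} (so R_0(u,w) is the one-point set Q^0). Then for every n ≥ 1 the set R_n(a,b) admits a partition into 2n+1 pairwise disjoint definable sets S_0, …, S_n, T_0, …, T_{n−1} such that each S_i (0 ≤ i ≤ n) is in definable bijection with R_i(c,b) × R_{n−i}(a,c) and each T_i (0 ≤ i ≤ n−1) is in definable bijection with R_i(c,b) × R_{n−1−i}(a,c). -/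
open FirstOrder FirstOrder.Language

attribute [local instance] FirstOrder.Language.orderStructure

/-- The cartesian product of `D₁ ⊆ Q^n` and `D₂ ⊆ Q^m`, viewed inside `Q^(n+m)`. -/
def pairSet {Q : Type*} {n m : ℕ} (D₁ : Set (Fin n → Q)) (D₂ : Set (Fin m → Q)) :
    Set (Fin (n + m) → Q) :=
  {z | ∃ x ∈ D₁, ∃ y ∈ D₂, z = Fin.append x y}

/-- `R_j(u,w)`: strictly decreasing `j`-tuples with all entries in the open interval `(u,w)`. -/
def Rint {Q : Type*} [LinearOrder Q] (u w : Q) (j : ℕ) : Set (Fin j → Q) :=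
  {x | StrictAnti x ∧ ∀ i, u < x i ∧ x i < w}

/-!
A strictly decreasing tuple `x` in `(a, b)` either passes through `c`, at a unique position `i`,
and deleting that entry leaves a point of `R_i(c,b) × R_{n-1-i}(a,c)`; or it avoids `c`, and
then for a unique `i` its first `i` entries lie above `c` and the others below, so that `x`
itself is a point of `R_i(c,b) × R_{n-i}(a,c)`. Both correspondences only delete or reindex
coordinates, so their graphs are cut out by order relations among coordinates and `a, c, b`.
-/

namespace FirstOrder.Language

variable {L : Language} [L.IsOrdered] {M : Type*} [L.Structure M] [Preorder M]
  [L.OrderedStructure M] {A : Set M} {α : Type*}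

theorem definable_setOf_lt_zero_one : A.Definable L {w : Fin 2 → M | w 0 < w 1} := by
  refine Set.Definable.mono (Set.empty_definable_iff.mpr
    ⟨Term.lt (Term.var (Sum.inl 0)) (Term.var (Sum.inl 1)), ?_⟩) (Set.empty_subset A)
  ext w
  simp [Formula.Realize, Term.realize_lt]

theorem _root_.Set.DefinableFun.ofPred_lt {f g : (α → M) → M}
    (hf : A.DefinableFun L f) (hg : A.DefinableFun L g) :
    A.Definable L {v | f v < g v} := by
  have hF : A.DefinableMap L (fun v => ![f v, g v]) := by
    simp [Set.DefinableMap, Fin.forall_fin_two, hf, hg]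
  exact definable_setOf_lt_zero_one.preimage_map hF

theorem definable_setOf_strictAnti {ι : Type*} [Preorder ι] [Finite ι] :
    A.Definable L {x : ι → M | StrictAnti x} := by
  simp only [StrictAnti, Set.ofPred_forall]
  refine Set.definable_iInter_of_finite fun p => Set.definable_iInter_of_finite fun q => ?_
  by_cases hpq : p < q
  · simpa [hpq] using (Set.DefinableFun.proj L).ofPred_lt (Set.DefinableFun.proj L)
  · simp [hpq, Set.definable_univ]

theorem definable_setOf_lt_and_lt {q r : M} (hq : q ∈ A) (hr : r ∈ A) (j : α) :
    A.Definable L {x : α → M | q < x j ∧ x j < r} :=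
  ((definableFun_const L α hq).ofPred_lt (Set.DefinableFun.proj L)).inter
    ((Set.DefinableFun.proj L).ofPred_lt (definableFun_const L α hr))

end FirstOrder.Language

theorem Fin.exists_iff_lt_of_antitone {n : ℕ} {P : Fin n → Prop} (hP : Antitone P) :
    ∃ i : Fin (n + 1), ∀ j : Fin n, P j ↔ (j : ℕ) < i := by
  let inP : ℕ → Prop := fun m => ∃ h : m < n, P ⟨m, h⟩
  have hn : ¬inP n := fun ⟨h, _⟩ => lt_irrefl n h
  have hex : ∃ m, ¬inP m := ⟨n, hn⟩
  classical
  refine ⟨⟨Nat.find hex, Nat.lt_succ_of_le (Nat.find_min' hex hn)⟩, fun j => ?_⟩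
  simp only [Nat.lt_find_iff, not_not]
  constructor
  · exact fun hj m hm => ⟨by omega, hP (show (⟨m, _⟩ : Fin n) ≤ j from hm) hj⟩
  · exact fun h => (h j le_rfl).2

theorem Fin.strictAnti_insertNth {α : Type*} [Preorder α] {m : ℕ} {i : Fin (m + 1)} {x : α}
    {y : Fin m → α} (hy : StrictAnti y) (hlt : ∀ j, i.succAbove j < i → x < y j)
    (hgt : ∀ j, i < i.succAbove j → y j < x) : StrictAnti (Fin.insertNth i x y) := by
  intro p q hpq
  rcases i.eq_self_or_eq_succAbove p with hp | ⟨j, rfl⟩ <;>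
    rcases i.eq_self_or_eq_succAbove q with hq | ⟨k, rfl⟩
  · exact absurd (hp.trans hq.symm) hpq.ne
  · rw [hp] at hpq ⊢
    simpa using hgt k hpq
  · rw [hq] at hpq ⊢
    simpa using hlt j hpq
  · simpa using hy ((Fin.strictMono_succAbove i).lt_iff_lt.mp hpq)

instance orderedStructure_orderStructure {Q : Type*} [LE Q] :
    Language.order.OrderedStructure Q :=
  ⟨fun _ => Iff.rfl⟩

theorem graphOn_comp_right {Q : Type*} {n m : ℕ} (D : Set (Fin n → Q)) (e : Fin m → Fin n) :
    graphOn D (· ∘ e) = (· ∘ Fin.castAdd m) ⁻¹' D ∩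
      ⋂ j, {z | z (Fin.natAdd n j) = z (Fin.castAdd m (e j))} := by
  ext z
  simp only [graphOn, Set.mem_ofPred_eq, Set.mem_inter_iff, Set.mem_preimage, Set.mem_iInter]
  constructor
  · rintro ⟨x, hx, rfl⟩
    have hleft : Fin.append x (x ∘ e) ∘ Fin.castAdd m = x := funext fun _ => Fin.append_left ..
    simp [hleft, hx]
  · rintro ⟨hz, hze⟩
    refine ⟨_, hz, ?_⟩
    conv_lhs => rw [← Fin.append_castAdd_natAdd (f := z)]
    exact congrArg _ (funext hze)

section

open Function

variable {Q : Type*} [LinearOrder Q]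

theorem DLODefinable.defBij_of_bijOn_comp {n m : ℕ} {D₁ : Set (Fin n → Q)}
    {D₂ : Set (Fin m → Q)} (hD₁ : DLODefinable D₁) (e : Fin m → Fin n)
    (h : Set.BijOn (· ∘ e) D₁ D₂) : DefBij D₁ D₂ := by
  obtain ⟨A, hA, hD⟩ := hD₁
  refine ⟨(· ∘ e), h, A, hA, ?_⟩
  rw [graphOn_comp_right]
  exact (hD.preimage_comp _).inter <| Set.definable_iInter_of_finite fun j =>
    (Set.DefinableFun.proj _).ofPred_eq (Set.DefinableFun.proj _)

theorem DLODefinable.defBij_self {n : ℕ} {D : Set (Fin n → Q)} (hD : DLODefinable D) :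
    DefBij D D :=
  hD.defBij_of_bijOn_comp id (Set.bijOn_id D)

theorem definable_Rint {A : Set Q} {u w : Q} (hu : u ∈ A) (hw : w ∈ A) (n : ℕ) :
    A.Definable Language.order (Rint u w n) := by
  rw [Rint, Set.ofPred_and, Set.ofPred_forall]
  exact Language.definable_setOf_strictAnti.inter <| Set.definable_iInter_of_finite fun j =>
    Language.definable_setOf_lt_and_lt hu hw j

variable {a c b : Q}

def splitPiece (a c b : Q) (n i : ℕ) : Set (Fin n → Q) :=
  {x | StrictAnti x ∧
    ∀ j : Fin n, if (j : ℕ) < i then c < x j ∧ x j < b else a < x j ∧ x j < c}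

def pivotPiece (a c b : Q) (n : ℕ) (i : Fin n) : Set (Fin n → Q) :=
  {x ∈ Rint a b n | x i = c}

theorem bounds_of_mem_splitPiece_of_lt {n i : ℕ} {x : Fin n → Q}
    (hx : x ∈ splitPiece a c b n i) {j : Fin n} (hj : (j : ℕ) < i) : c < x j ∧ x j < b := by
  simpa [hj] using hx.2 j

theorem bounds_of_mem_splitPiece_of_not_lt {n i : ℕ} {x : Fin n → Q}
    (hx : x ∈ splitPiece a c b n i) {j : Fin n} (hj : ¬(j : ℕ) < i) : a < x j ∧ x j < c := by
  simpa [hj] using hx.2 j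

theorem ne_of_mem_splitPiece {n i : ℕ} {x : Fin n → Q} (hx : x ∈ splitPiece a c b n i)
    (j : Fin n) : x j ≠ c := by
  by_cases hj : (j : ℕ) < i
  exacts [(bounds_of_mem_splitPiece_of_lt hx hj).1.ne',
    (bounds_of_mem_splitPiece_of_not_lt hx hj).2.ne]

theorem splitPiece_subset_Rint (hac : a < c) (hcb : c < b) (n i : ℕ) :
    splitPiece a c b n i ⊆ Rint a b n := by
  refine fun x hx => ⟨hx.1, fun j => ?_⟩
  by_cases hj : (j : ℕ) < i
  · exact ⟨hac.trans (bounds_of_mem_splitPiece_of_lt hx hj).1,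
      (bounds_of_mem_splitPiece_of_lt hx hj).2⟩
  · exact ⟨(bounds_of_mem_splitPiece_of_not_lt hx hj).1,
      (bounds_of_mem_splitPiece_of_not_lt hx hj).2.trans hcb⟩

theorem pairwise_disjoint_splitPiece (n : ℕ) :
    Pairwise (Disjoint on fun i : Fin (n + 1) => splitPiece a c b n i) := by
  refine (pairwise_disjoint_on _).mpr fun i k hik => Set.disjoint_left.mpr fun x hxi hxk => ?_
  have hin : (i : ℕ) < n := by omega
  exact lt_asymm (bounds_of_mem_splitPiece_of_not_lt hxi (j := ⟨i, hin⟩) (lt_irrefl _)).2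
    (bounds_of_mem_splitPiece_of_lt hxk (j := ⟨i, hin⟩) hik).1

theorem pairwise_disjoint_pivotPiece (n : ℕ) : Pairwise (Disjoint on pivotPiece a c b n) :=
  fun _ _ hik => Set.disjoint_left.mpr fun _ hxi hxk =>
    hik (hxi.1.1.injective (hxi.2.trans hxk.2.symm))

theorem disjoint_splitPiece_pivotPiece (n i : ℕ) (k : Fin n) :
    Disjoint (splitPiece a c b n i) (pivotPiece a c b n k) :=
  Set.disjoint_left.mpr fun _ hS hT => ne_of_mem_splitPiece hS k hT.2

theorem iUnion_splitPiece_union_iUnion_pivotPiece (hac : a < c) (hcb : c < b) (n : ℕ) :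
    (⋃ i : Fin (n + 1), splitPiece a c b n i) ∪ ⋃ i, pivotPiece a c b n i = Rint a b n := by
  refine subset_antisymm (Set.union_subset
    (Set.iUnion_subset fun i => splitPiece_subset_Rint hac hcb n i)
    (Set.iUnion_subset fun i => Set.sep_subset _ _)) fun x hx => ?_
  by_cases hc : ∃ k, x k = c
  · obtain ⟨k, hk⟩ := hc
    exact Or.inr (Set.mem_iUnion.mpr ⟨k, hx, hk⟩)
  obtain ⟨i, hi⟩ := Fin.exists_iff_lt_of_antitone (P := fun j => c < x j)
    fun j k hjk h => h.trans_le (hx.1.antitone hjk)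
  refine Or.inl (Set.mem_iUnion.mpr ⟨i, hx.1, fun j => ?_⟩)
  split_ifs with hj
  · exact ⟨(hi j).mpr hj, (hx.2 j).2⟩
  · exact ⟨(hx.2 j).1, lt_of_le_of_ne (not_lt.mp (mt (hi j).mp hj)) (not_exists.mp hc j)⟩

theorem pairSet_Rint_Rint (i j : ℕ) :
    pairSet (Rint c b i) (Rint a c j) = splitPiece a c b (i + j) i := by
  ext z
  constructor
  · rintro ⟨x, hx, y, hy, rfl⟩
    refine ⟨fun p q hpq => ?_, fun k => ?_⟩
    · induction p using Fin.addCases <;> induction q using Fin.addCases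
      · simpa using hx.1 ((Fin.strictMono_castAdd j).lt_iff_lt.mp hpq)
      · simpa using (hy.2 _).2.trans (hx.2 _).1
      · simp [Fin.lt_def] at hpq
        omega
      · simpa using hy.1 ((Fin.strictMono_natAdd i).lt_iff_lt.mp hpq)
    · induction k using Fin.addCases
      · simpa using hx.2 _
      · simpa using hy.2 _
  · rintro ⟨hz, hbounds⟩
    refine ⟨_, ⟨hz.comp_strictMono (Fin.strictMono_castAdd j), fun k => ?_⟩,
      _, ⟨hz.comp_strictMono (Fin.strictMono_natAdd i), fun k => ?_⟩,
      Fin.append_castAdd_natAdd.symm⟩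
    · simpa using hbounds (Fin.castAdd j k)
    · simpa using hbounds (Fin.natAdd i k)

theorem bijOn_comp_succAbove_pivotPiece (hac : a < c) (hcb : c < b) {m : ℕ} (i : Fin (m + 1)) :
    Set.BijOn (· ∘ i.succAbove) (pivotPiece a c b (m + 1) i) (splitPiece a c b m i) := by
  have succAbove_lt_iff (j : Fin m) : i.succAbove j < i ↔ (j : ℕ) < i := by
    rw [Fin.succAbove_lt_iff_castSucc_lt, Fin.lt_def, Fin.val_castSucc]
  have lt_succAbove_iff (j : Fin m) : i < i.succAbove j ↔ ¬(j : ℕ) < i := by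
    rw [← succAbove_lt_iff, not_lt, le_iff_lt_or_eq, or_iff_left (Fin.succAbove_ne i j).symm]
  refine ⟨fun x ⟨⟨hx, hxab⟩, hxi⟩ => ⟨hx.comp_strictMono (Fin.strictMono_succAbove i),
    fun j => ?_⟩, fun x ⟨_, hxi⟩ y ⟨_, hyi⟩ hxy => ?_, fun y hy => ?_⟩
  · split_ifs with hj
    · exact ⟨hxi ▸ hx ((succAbove_lt_iff j).mpr hj), (hxab _).2⟩
    · exact ⟨(hxab _).1, hxi ▸ hx ((lt_succAbove_iff j).mpr hj)⟩
  · rw [← Fin.insertNth_self_removeNth i x, ← Fin.insertNth_self_removeNth i y, hxi, hyi]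
    exact congrArg _ hxy
  · have hanti : StrictAnti (Fin.insertNth i c y) := Fin.strictAnti_insertNth hy.1
      (fun j hj => (bounds_of_mem_splitPiece_of_lt hy ((succAbove_lt_iff j).mp hj)).1)
      (fun j hj => (bounds_of_mem_splitPiece_of_not_lt hy ((lt_succAbove_iff j).mp hj)).2)
    refine ⟨Fin.insertNth i c y, ⟨⟨hanti, fun k => ?_⟩, Fin.insertNth_apply_same ..⟩,
      Fin.removeNth_insertNth ..⟩
    rcases i.eq_self_or_eq_succAbove k with rfl | ⟨j, rfl⟩
    · simpa using ⟨hac, hcb⟩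
    · simpa using (splitPiece_subset_Rint hac hcb m i hy).2 j

theorem dloDefinable_splitPiece (a c b : Q) (n i : ℕ) : DLODefinable (splitPiece a c b n i) := by
  rw [splitPiece, Set.ofPred_and, Set.ofPred_forall]
  refine ⟨{a, c, b}, Set.toFinite _, Language.definable_setOf_strictAnti.inter <|
    Set.definable_iInter_of_finite fun j => ?_⟩
  split_ifs
  · exact Language.definable_setOf_lt_and_lt (by simp) (by simp) j
  · exact Language.definable_setOf_lt_and_lt (by simp) (by simp) j

theorem dloDefinable_pivotPiece (a c b : Q) {n : ℕ} (i : Fin n) :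
    DLODefinable (pivotPiece a c b n i) :=
  ⟨{a, c, b}, Set.toFinite _, (definable_Rint (by simp) (by simp) n).inter
    ((Set.DefinableFun.proj _).ofPred_eq_const (by simp))⟩

theorem defBij_splitPiece {n : ℕ} (i : Fin (n + 1)) :
    DefBij (splitPiece a c b n i) (pairSet (Rint c b i) (Rint a c (n - i))) := by
  rw [pairSet_Rint_Rint, Nat.add_sub_cancel' (Nat.le_of_lt_succ i.isLt)]
  exact (dloDefinable_splitPiece a c b n i).defBij_self

theorem defBij_pivotPiece (hac : a < c) (hcb : c < b) {n : ℕ} (i : Fin n) :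
    DefBij (pivotPiece a c b n i) (pairSet (Rint c b i) (Rint a c (n - 1 - i))) := by
  obtain ⟨m, rfl⟩ := Nat.exists_eq_add_one_of_ne_zero i.pos.ne'
  rw [pairSet_Rint_Rint, show (i : ℕ) + (m + 1 - 1 - i) = m by have := i.isLt; omega]
  exact (dloDefinable_pivotPiece a c b i).defBij_of_bijOn_comp _
    (bijOn_comp_succAbove_pivotPiece hac hcb i)

end

theorem dlo_interval_split_general {Q : Type*} [LinearOrder Q]
    (a c b : Q) (hac : a < c) (hcb : c < b) (n : ℕ) :
    ∃ (S : Fin (n + 1) → Set (Fin n → Q)) (T : Fin n → Set (Fin n → Q)),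
      (∀ i j, i ≠ j → Disjoint (S i) (S j)) ∧
      (∀ i j, i ≠ j → Disjoint (T i) (T j)) ∧
      (∀ i j, Disjoint (S i) (T j)) ∧
      ((⋃ i, S i) ∪ (⋃ i, T i) = Rint a b n) ∧
      (∀ i : Fin (n + 1), DLODefinable (S i) ∧
        DefBij (S i) (pairSet (Rint c b (i : ℕ)) (Rint a c (n - (i : ℕ))))) ∧
      (∀ i : Fin n, DLODefinable (T i) ∧
        DefBij (T i) (pairSet (Rint c b (i : ℕ)) (Rint a c (n - 1 - (i : ℕ))))) :=
  ⟨fun i => splitPiece a c b n i, pivotPiece a c b n, pairwise_disjoint_splitPiece n,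
    pairwise_disjoint_pivotPiece n, fun i k => disjoint_splitPiece_pivotPiece n i k,
    iUnion_splitPiece_union_iUnion_pivotPiece hac hcb n,
    fun i => ⟨dloDefinable_splitPiece a c b n i, defBij_splitPiece i⟩,
    fun i => ⟨dloDefinable_pivotPiece a c b i, defBij_pivotPiece hac hcb i⟩⟩

/-- Splitting an interval at an intermediate point: `R_n(a,b)` partitions into `2n+1`
pairwise disjoint definable pieces `S_0, …, S_n, T_0, …, T_{n-1}` with
`S_i ≈ R_i(c,b) × R_{n-i}(a,c)` and `T_i ≈ R_i(c,b) × R_{n-1-i}(a,c)`. -/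
theorem dlo_interval_split {Q : Type*} [LinearOrder Q] [DenselyOrdered Q] [NoMinOrder Q]
    [NoMaxOrder Q] [Nonempty Q] (a c b : Q) (hac : a < c) (hcb : c < b) (n : ℕ)
    (hn : 1 ≤ n) :
    ∃ (S : Fin (n + 1) → Set (Fin n → Q)) (T : Fin n → Set (Fin n → Q)),
      (∀ i j, i ≠ j → Disjoint (S i) (S j)) ∧
      (∀ i j, i ≠ j → Disjoint (T i) (T j)) ∧
      (∀ i j, Disjoint (S i) (T j)) ∧
      ((⋃ i, S i) ∪ (⋃ i, T i) = Rint a b n) ∧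
      (∀ i : Fin (n + 1), DLODefinable (S i) ∧
        DefBij (S i) (pairSet (Rint c b (i : ℕ)) (Rint a c (n - (i : ℕ))))) ∧
      (∀ i : Fin n, DLODefinable (T i) ∧
        DefBij (T i) (pairSet (Rint c b (i : ℕ)) (Rint a c (n - 1 - (i : ℕ))))) :=
  dlo_interval_split_general a c b hac hcb n
end
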